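/- arXiv:math/0103177 — 9 statements merged into one kernel-verified Lean document; each statement's English description precedes it below -/
import Mathlib

section
/- Let G be a finite group acting on a finite set X. Let μ𝒜 be a ℚ-valued function on the set of abelian subgroups of G satisfying, for every abelian subgroup A ≤ G, Σ_{B abelian, A ≤ B ≤ G} μ𝒜(B) = 1, and let μℂ be a ℚ-valued function on the set of abelian subgroups of G satisfying, for every abelian subgroup A ≤ G, Σ_{B abelian, A ≤ B ≤ G} μℂ(B) = |X^A|, where X^A is the set of points of X fixed by every element of A. Then |X/G| = (1/|G|) · Σ_{A} |A| · μ𝒜(A) · |X/A| = (1/|G|) · Σ_{B} |B| · μℂ(B), where both sums run over all abelian subgroups of G and X/A denotes the set of orbits of X under the restricted action of A. -/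
/-- A subgroup is abelian if all its elements commute. -/
def Subgroup.IsAbelian {G : Type*} [Group G] (H : Subgroup G) : Prop :=
  ∀ a ∈ H, ∀ b ∈ H, a * b = b * a

private lemma burnsideQ (H : Type*) [Group H] [Fintype H] (Y : Type*) [Finite Y]
    [MulAction H Y] :
    ∑ h : H, (Nat.card (MulAction.fixedBy Y h) : ℚ) =
      (Nat.card (Quotient (MulAction.orbitRel H Y)) : ℚ) * Nat.card H := by
  classical
  haveI : ∀ h : H, Fintype (MulAction.fixedBy Y h) := fun h => Fintype.ofFinite _
  haveI : Fintype (Quotient (MulAction.orbitRel H Y)) := Fintype.ofFinite _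
  have := MulAction.sum_card_fixedBy_eq_card_orbits_mul_card_group H Y
  simp only [Nat.card_eq_fintype_card]
  exact_mod_cast this

private lemma zpowers_isAbelian {G : Type*} [Group G] (g : G) :
    (Subgroup.zpowers g).IsAbelian := by
  intro a ha b hb
  obtain ⟨m, rfl⟩ := Subgroup.mem_zpowers_iff.mp ha
  obtain ⟨n, rfl⟩ := Subgroup.mem_zpowers_iff.mp hb
  exact ((Commute.refl g).zpow_zpow m n).eq

private lemma fixedPoints_zpowers {G : Type*} [Group G] (X : Type*) [MulAction G X] (g : G) :
    MulAction.fixedPoints (Subgroup.zpowers g) X = MulAction.fixedBy X g := by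
  ext x
  constructor
  · intro h
    exact h ⟨g, Subgroup.mem_zpowers g⟩
  · intro h
    rintro ⟨b, hb⟩
    have hle : Subgroup.zpowers g ≤ MulAction.stabilizer G x := by
      rw [Subgroup.zpowers_le]
      exact h
    exact hle hb

/-- **Corollary 2-4.** For a finite group `G` acting on a finite set `X`, and Möbius functions
`μ𝒜`, `μℂ` on abelian subgroups defined by `Σ_{A ≤ B, B abelian} μ𝒜(B) = 1` and
`Σ_{A ≤ B, B abelian} μℂ(B) = |X^A|`, one has
`|X/G| = (1/|G|) Σ_A |A|·μ𝒜(A)·|X/A| = (1/|G|) Σ_B |B|·μℂ(B)`,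
the sums being over all abelian subgroups of `G`. -/
theorem card_orbits_eq_abelian_moebius_sums
    (G : Type) [Group G] [Finite G] (X : Type) [Finite X] [MulAction G X]
    (μA μC : Subgroup G → ℚ)
    (hA : ∀ A : Subgroup G, A.IsAbelian →
      (∑ᶠ (B : Subgroup G) (_ : B.IsAbelian ∧ A ≤ B), μA B) = 1)
    (hC : ∀ A : Subgroup G, A.IsAbelian →
      (∑ᶠ (B : Subgroup G) (_ : B.IsAbelian ∧ A ≤ B), μC B) =
        (Nat.card (MulAction.fixedPoints A X) : ℚ)) :
    (Nat.card (Quotient (MulAction.orbitRel G X)) : ℚ) =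
        (Nat.card G : ℚ)⁻¹ *
          ∑ᶠ (A : Subgroup G) (_ : A.IsAbelian),
            (Nat.card A : ℚ) * μA A *
              (Nat.card (Quotient (MulAction.orbitRel A X)) : ℚ) ∧
      (Nat.card (Quotient (MulAction.orbitRel G X)) : ℚ) =
        (Nat.card G : ℚ)⁻¹ *
          ∑ᶠ (B : Subgroup G) (_ : B.IsAbelian), (Nat.card B : ℚ) * μC B := by
  classical
  cases nonempty_fintype G
  haveI : Fintype (Subgroup G) := Fintype.ofFinite _
  set S : Finset (Subgroup G) := Finset.univ.filter Subgroup.IsAbelian with hS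
  -- the fixed-point counting function
  set c : G → ℚ := fun g => (Nat.card (MulAction.fixedBy X g) : ℚ) with hc
  -- rewrite hypotheses as finset sums
  have hA' : ∀ A : Subgroup G, A.IsAbelian →
      ∑ B ∈ S.filter (fun B => A ≤ B), μA B = 1 := by
    intro A hAab
    rw [← hA A hAab]
    exact (finsum_cond_eq_sum_of_cond_iff _ (by intro B _; simp [hS])).symm
  have hC' : ∀ A : Subgroup G, A.IsAbelian →
      ∑ B ∈ S.filter (fun B => A ≤ B), μC B =
        (Nat.card (MulAction.fixedPoints A X) : ℚ) := by
    intro A hAab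
    rw [← hC A hAab]
    exact (finsum_cond_eq_sum_of_cond_iff _ (by intro B _; simp [hS])).symm
  -- sum over subgroup elements as a finset sum over G
  have hsub : ∀ (B : Subgroup G) (f : G → ℚ),
      ∑ g ∈ Finset.univ.filter (· ∈ B), f g = ∑ g : B, f ↑g := by
    intro B f
    haveI : Fintype B := Fintype.ofFinite _
    exact Finset.sum_subtype _ (by simp) f
  -- cardinality of a subgroup as a sum of ones
  have hcard : ∀ B : Subgroup G,
      (Nat.card B : ℚ) = ∑ _g ∈ Finset.univ.filter (· ∈ B), (1 : ℚ) := by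
    intro B
    rw [hsub B (fun _ => (1 : ℚ))]
    simp [Nat.card_eq_fintype_card]
  -- the `g ∈ B` filter agrees with the `zpowers g ≤ B` filter
  have hfilt : ∀ g : G, S.filter (fun B => g ∈ B) =
      S.filter (fun B => Subgroup.zpowers g ≤ B) := by
    intro g
    apply Finset.filter_congr
    intro B _
    simp [Subgroup.zpowers_le]
  -- `|G|` is nonzero
  have hGpos : (0 : ℚ) < (Nat.card G : ℚ) := by exact_mod_cast Nat.card_pos
  -- first sum
  have e1 : ∑ A ∈ S, (Nat.card A : ℚ) * μA A *
      (Nat.card (Quotient (MulAction.orbitRel A X)) : ℚ) =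
      (Nat.card (Quotient (MulAction.orbitRel G X)) : ℚ) * (Nat.card G : ℚ) := by
    have step : ∀ B ∈ S, (Nat.card B : ℚ) * μA B *
        (Nat.card (Quotient (MulAction.orbitRel B X)) : ℚ) =
        ∑ g ∈ Finset.univ.filter (· ∈ B), μA B * c g := by
      intro B _
      calc (Nat.card B : ℚ) * μA B * (Nat.card (Quotient (MulAction.orbitRel B X)) : ℚ)
          = μA B * ((Nat.card (Quotient (MulAction.orbitRel B X)) : ℚ) * (Nat.card B : ℚ)) := by
            ring
        _ = μA B * ∑ h : B, (Nat.card (MulAction.fixedBy X h) : ℚ) := by rw [burnsideQ]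
        _ = ∑ h : B, μA B * c (↑h : G) := by rw [Finset.mul_sum]; rfl
        _ = ∑ g ∈ Finset.univ.filter (· ∈ B), μA B * c g := (hsub B (fun g => μA B * c g)).symm
    rw [Finset.sum_congr rfl step]
    rw [Finset.sum_comm' (t' := Finset.univ)
      (s' := fun g => S.filter (fun B => g ∈ B)) (by intro B g; simp)]
    have inner : ∀ g : G, ∑ B ∈ S.filter (fun B => g ∈ B), μA B * c g = c g := by
      intro g
      rw [← Finset.sum_mul, hfilt g, hA' _ (zpowers_isAbelian g), one_mul]
    rw [Finset.sum_congr rfl fun g _ => inner g]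
    exact burnsideQ G X
  -- second sum
  have e2 : ∑ B ∈ S, (Nat.card B : ℚ) * μC B =
      (Nat.card (Quotient (MulAction.orbitRel G X)) : ℚ) * (Nat.card G : ℚ) := by
    have step : ∀ B ∈ S, (Nat.card B : ℚ) * μC B =
        ∑ g ∈ Finset.univ.filter (· ∈ B), μC B := by
      intro B _
      rw [hcard B, Finset.sum_mul, one_mul]
    rw [Finset.sum_congr rfl step]
    rw [Finset.sum_comm' (t' := Finset.univ)
      (s' := fun g => S.filter (fun B => g ∈ B)) (by intro B g; simp)]
    have inner : ∀ g : G, ∑ B ∈ S.filter (fun B => g ∈ B), μC B = c g := by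
      intro g
      rw [hfilt g, hC' _ (zpowers_isAbelian g), hc]
      simp [fixedPoints_zpowers]
    rw [Finset.sum_congr rfl fun g _ => inner g]
    exact burnsideQ G X
  constructor
  · rw [finsum_cond_eq_sum_of_cond_iff _ (p := Subgroup.IsAbelian) (t := S)
      (by intro B _; simp [hS]), e1]
    field_simp
  · rw [finsum_cond_eq_sum_of_cond_iff _ (p := Subgroup.IsAbelian) (t := S)
      (by intro B _; simp [hS]), e2]
    field_simp
end

section
/- For all integers d ≥ 1 and r ≥ 1, the number j_r(ℤ^d) of subgroups of index r in the free abelian group ℤ^d satisfies j_r(ℤ^d) = Σ_{r_1 r_2 ⋯ r_d = r} r_2 · r_3² ⋯ r_d^{d−1}, where the sum is over all d-tuples (r_1,…,r_d) of positive integers with product r. Moreover, for d ≥ 2, j_r(ℤ^d) = Σ_{m ∣ r} m · j_m(ℤ^{d−1}), the sum over all positive divisors m of r. -/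
/-- `j_r(ℤ^d)`: the number of subgroups of index `r` in `ℤ^d`. -/
noncomputable def jZ (d r : ℕ) : ℕ :=
  Nat.card {H : AddSubgroup (Fin d → ℤ) // H.index = r}

/-!
A subgroup `H ≤ ℤ × M` is determined by its projection `aℤ` to the first factor, its trace
`K = H ∩ ({0} × M)`, and the class modulo `K` of any `v` with `(a, v) ∈ H`; every such triple
with `a ≠ 0` occurs, and `[ℤ × M : H] = a · [M : K]`. So `ℤ × M` has
`∑_{m ∣ r} m · #{K ≤ M of index m}` subgroups of index `r`, which for `M = ℤ^d` is the
recursion in `d`. Splitting off the first entry of a `(d+1)`-tuple with product `r` shows that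
the weighted tuple sums obey the same recursion, and both sides equal `[r = 1]` for `d = 0`.
-/

open AddSubgroup

abbrev SubgroupsOfIndex (G : Type*) [AddGroup G] (r : ℕ) := {H : AddSubgroup G // H.index = r}

def AddEquiv.subgroupsOfIndexCongr {A B : Type*} [AddGroup A] [AddGroup B] (e : A ≃+ B)
    (r : ℕ) : SubgroupsOfIndex A r ≃ SubgroupsOfIndex B r :=
  e.mapAddSubgroup.toEquiv.subtypeEquiv fun H => by simp [index_map_equiv]

theorem card_subgroupsOfIndex_of_subsingleton (G : Type*) [AddGroup G] [Subsingleton G]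
    (r : ℕ) : Nat.card (SubgroupsOfIndex G r) = if r = 1 then 1 else 0 := by
  have hH (H : AddSubgroup G) : H.index = 1 := index_eq_one.mpr (Subsingleton.elim _ _)
  split_ifs with hr
  · subst hr
    exact Nat.card_eq_one_iff_unique.mpr
      ⟨⟨fun _ _ => Subtype.ext (Subsingleton.elim _ _)⟩, ⟨⟨⊤, index_top⟩⟩⟩
  · have : IsEmpty (SubgroupsOfIndex G r) := ⟨fun H => hr (H.2.symm.trans (hH H.1))⟩
    exact Nat.card_of_isEmpty

theorem AddSubgroup.index_eq_index_map_fst_mul_index_comap_inr {G N : Type*} [AddCommGroup G]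
    [AddCommGroup N] (H : AddSubgroup (G × N)) :
    H.index = (H.map (AddMonoidHom.fst G N)).index * (H.comap (AddMonoidHom.inr G N)).index := by
  have hker : (AddMonoidHom.fst G N).ker = (⊤ : AddSubgroup N).map (AddMonoidHom.inr G N) := by
    ext ⟨x, y⟩
    simp [mem_prod, eq_comm]
  rw [index_map, (AddMonoidHom.fst G N).range_eq_top.mpr Prod.fst_surjective, index_top, mul_one,
    ← relIndex_top_right (H.comap _), relIndex_comap, ← hker, ← relIndex_sup_left,
    mul_comm, relIndex_mul_index le_sup_left]

theorem AddSubgroup.eq_zmultiples_index (B : AddSubgroup ℤ) : B = zmultiples (B.index : ℤ) := by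
  obtain ⟨g, rfl⟩ := Int.subgroup_cyclic B
  rw [← zmultiples_eq_closure, Int.index_zmultiples, Int.zmultiples_natAbs]

section IntProd

variable {M : Type*} [AddCommGroup M]

def zmultiplesSupInr (a : ℤ) (v : M) (K : AddSubgroup M) : AddSubgroup (ℤ × M) :=
  zmultiples (a, v) ⊔ K.map (AddMonoidHom.inr ℤ M)

section

variable {a : ℤ} {v w : M} {K : AddSubgroup M}

theorem mem_zmultiplesSupInr {p : ℤ × M} :
    p ∈ zmultiplesSupInr a v K ↔ ∃ k : ℤ, p.1 = k * a ∧ p.2 - k • v ∈ K := by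
  simp only [zmultiplesSupInr, mem_sup, mem_zmultiples_iff, mem_map, AddMonoidHom.inr_apply]
  constructor
  · rintro ⟨_, ⟨k, rfl⟩, _, ⟨y, hy, rfl⟩, rfl⟩
    exact ⟨k, by simp, by simpa using hy⟩
  · rintro ⟨k, h1, h2⟩
    exact ⟨_, ⟨k, rfl⟩, _, ⟨_, h2, rfl⟩, Prod.ext (by simp [h1]) (by simp)⟩

theorem map_fst_zmultiplesSupInr :
    (zmultiplesSupInr a v K).map (AddMonoidHom.fst ℤ M) = zmultiples a := by
  rw [zmultiplesSupInr, AddSubgroup.map_sup, map_map, AddMonoidHom.fst_comp_inr, map_zero_eq_bot,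
    sup_bot_eq, AddMonoidHom.map_zmultiples]
  rfl

theorem comap_inr_zmultiplesSupInr (ha : a ≠ 0) :
    (zmultiplesSupInr a v K).comap (AddMonoidHom.inr ℤ M) = K := by
  ext y
  simp [mem_zmultiplesSupInr, eq_comm (a := (0 : ℤ)), ha]

theorem zmultiplesSupInr_le_of_sub_mem (h : v - w ∈ K) :
    zmultiplesSupInr a v K ≤ zmultiplesSupInr a w K :=
  sup_le (zmultiples_le.mpr (mem_zmultiplesSupInr.mpr ⟨1, by simp, by simpa using h⟩))
    le_sup_right

theorem zmultiplesSupInr_eq_iff (ha : a ≠ 0) :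
    zmultiplesSupInr a v K = zmultiplesSupInr a w K ↔ v - w ∈ K := by
  refine ⟨fun h => ?_, fun h => le_antisymm (zmultiplesSupInr_le_of_sub_mem h)
    (zmultiplesSupInr_le_of_sub_mem (by rwa [← neg_mem_iff, neg_sub]))⟩
  have hv : ((a, v) : ℤ × M) ∈ zmultiplesSupInr a w K := h ▸ mem_sup_left (mem_zmultiples _)
  obtain ⟨k, hk, hvk⟩ := mem_zmultiplesSupInr.mp hv
  obtain rfl : k = 1 := by simpa [ha] using mul_left_eq_self₀.mp hk.symm
  simpa using hvk

theorem eq_zmultiplesSupInr {H : AddSubgroup (ℤ × M)}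
    (hH : H.map (AddMonoidHom.fst ℤ M) = zmultiples a) (hv : (a, v) ∈ H) :
    H = zmultiplesSupInr a v (H.comap (AddMonoidHom.inr ℤ M)) := by
  refine le_antisymm (fun p hp => ?_) (sup_le (zmultiples_le.mpr hv) (map_comap_le _ _))
  obtain ⟨k, hk⟩ := mem_zmultiples_iff.mp (hH ▸ mem_map_of_mem _ hp : p.1 ∈ zmultiples a)
  refine mem_zmultiplesSupInr.mpr ⟨k, by simp [← hk], ?_⟩
  have : p - k • (a, v) = ((0 : ℤ), p.2 - k • v) := Prod.ext (by simp [← hk]) (by simp)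
  simpa [mem_comap, ← this] using sub_mem hp (zsmul_mem hv k)

end

noncomputable def quotientEquivSubgroupsWithMapFstComapInr {a : ℤ} (ha : a ≠ 0)
    (K : AddSubgroup M) :
    M ⧸ K ≃ {H : AddSubgroup (ℤ × M) //
      H.map (AddMonoidHom.fst ℤ M) = zmultiples a ∧ H.comap (AddMonoidHom.inr ℤ M) = K} := by
  refine Equiv.ofBijective (fun q => q.liftOn' (fun v => ⟨zmultiplesSupInr a v K,
      map_fst_zmultiplesSupInr, comap_inr_zmultiplesSupInr ha⟩) fun v w hvw => Subtype.ext ?_)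
    ⟨?_, ?_⟩
  · exact (zmultiplesSupInr_eq_iff ha).mpr
      (QuotientAddGroup.eq_iff_sub_mem.mp (Quotient.sound hvw))
  · rintro ⟨v⟩ ⟨w⟩ h
    exact QuotientAddGroup.eq_iff_sub_mem.mpr
      ((zmultiplesSupInr_eq_iff ha).mp (congrArg Subtype.val h))
  · rintro ⟨H, hH, rfl⟩
    obtain ⟨p, hp, hpa⟩ := mem_map.mp (hH ▸ mem_zmultiples a)
    have hv : (a, p.2) ∈ H := by simpa [← hpa] using hp
    exact ⟨QuotientAddGroup.mk p.2, Subtype.ext (eq_zmultiplesSupInr hH hv).symm⟩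

theorem map_fst_eq_zmultiples_index_div {H : AddSubgroup (ℤ × M)}
    (hH : (H.comap (AddMonoidHom.inr ℤ M)).index ≠ 0) :
    H.map (AddMonoidHom.fst ℤ M) =
      zmultiples ((H.index / (H.comap (AddMonoidHom.inr ℤ M)).index : ℕ) : ℤ) := by
  rw [index_eq_index_map_fst_mul_index_comap_inr, Nat.mul_div_cancel _ (Nat.pos_of_ne_zero hH)]
  exact eq_zmultiples_index _

theorem index_eq_natAbs_mul_index {a : ℤ} {K : AddSubgroup M} {H : AddSubgroup (ℤ × M)}
    (hH : H.map (AddMonoidHom.fst ℤ M) = zmultiples a ∧ H.comap (AddMonoidHom.inr ℤ M) = K) :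
    H.index = a.natAbs * K.index := by
  rw [index_eq_index_map_fst_mul_index_comap_inr, hH.1, hH.2, Int.index_zmultiples]

theorem index_comap_inr_dvd_index (H : AddSubgroup (ℤ × M)) :
    (H.comap (AddMonoidHom.inr ℤ M)).index ∣ H.index :=
  Dvd.intro_left _ (index_eq_index_map_fst_mul_index_comap_inr H).symm

variable {r : ℕ}

noncomputable def comapInrWithIndex (hr : r ≠ 0) (H : SubgroupsOfIndex (ℤ × M) r) :
    Σ m : r.divisors, SubgroupsOfIndex M m :=
  ⟨⟨(H.1.comap (AddMonoidHom.inr ℤ M)).index, Nat.mem_divisors.mpr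
    ⟨(index_comap_inr_dvd_index H.1).trans (dvd_of_eq H.2), hr⟩⟩, ⟨_, rfl⟩⟩

theorem comapInrWithIndex_eq_iff (hr : r ≠ 0) {H : SubgroupsOfIndex (ℤ × M) r}
    {K : Σ m : r.divisors, SubgroupsOfIndex M m} :
    comapInrWithIndex hr H = K ↔ H.1.comap (AddMonoidHom.inr ℤ M) = K.2.1 := by
  refine ⟨fun h => h ▸ rfl, fun h => Sigma.subtype_ext (Subtype.ext ?_) h⟩
  simp [comapInrWithIndex, h, K.2.2]

def fiberComapInrWithIndexEquiv (hr : r ≠ 0) (K : Σ m : r.divisors, SubgroupsOfIndex M m) :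
    {H // comapInrWithIndex hr H = K} ≃
      {H : AddSubgroup (ℤ × M) // H.map (AddMonoidHom.fst ℤ M) = zmultiples ((r / K.1 : ℕ) : ℤ) ∧
        H.comap (AddMonoidHom.inr ℤ M) = K.2.1} where
  toFun H := ⟨H.1.1, by
    have hm : (H.1.1.comap (AddMonoidHom.inr ℤ M)).index = K.1 :=
      congrArg (fun x => (x.1 : ℕ)) H.2
    rw [map_fst_eq_zmultiples_index_div (hm ▸ (Nat.pos_of_mem_divisors K.1.2).ne'), H.1.2, hm],
    (comapInrWithIndex_eq_iff hr).mp H.2⟩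
  invFun H := ⟨⟨H.1, by
    rw [index_eq_natAbs_mul_index H.2, Int.natAbs_natCast, K.2.2,
      Nat.div_mul_cancel (Nat.dvd_of_mem_divisors K.1.2)]⟩,
    (comapInrWithIndex_eq_iff hr).mpr H.2.2⟩
  left_inv _ := rfl
  right_inv _ := rfl

noncomputable def subgroupsOfIndexIntProdEquiv (hr : r ≠ 0) :
    SubgroupsOfIndex (ℤ × M) r ≃ Σ K : Σ m : r.divisors, SubgroupsOfIndex M m, M ⧸ K.2.1 :=
  (Equiv.sigmaFiberEquiv (comapInrWithIndex hr)).symm.trans <| Equiv.sigmaCongrRight fun K =>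
    (fiberComapInrWithIndexEquiv hr K).trans
      (quotientEquivSubgroupsWithMapFstComapInr (Nat.cast_ne_zero.mpr
        ((Nat.div_ne_zero_iff_of_dvd (Nat.dvd_of_mem_divisors K.1.2)).mpr
          ⟨hr, (Nat.pos_of_mem_divisors K.1.2).ne'⟩)) K.2.1).symm

theorem finite_quotient_of_mem_subgroupsOfIndex {m : ℕ} (hm : m ≠ 0)
    (K : SubgroupsOfIndex M m) : Finite (M ⧸ K.1) :=
  have : K.1.FiniteIndex := ⟨by rw [K.2]; exact hm⟩
  inferInstance

theorem finite_subgroupsOfIndex_int_prod (hr : r ≠ 0)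
    (hfin : ∀ m ∈ r.divisors, Finite (SubgroupsOfIndex M m)) :
    Finite (SubgroupsOfIndex (ℤ × M) r) := by
  have := fun m : r.divisors => hfin m m.2
  have := fun K : Σ m : r.divisors, SubgroupsOfIndex M m =>
    finite_quotient_of_mem_subgroupsOfIndex (Nat.pos_of_mem_divisors K.1.2).ne' K.2
  exact .of_equiv _ (subgroupsOfIndexIntProdEquiv hr).symm

theorem card_subgroupsOfIndex_int_prod (hr : r ≠ 0)
    (hfin : ∀ m ∈ r.divisors, Finite (SubgroupsOfIndex M m)) :
    Nat.card (SubgroupsOfIndex (ℤ × M) r) =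
      ∑ m ∈ r.divisors, m * Nat.card (SubgroupsOfIndex M m) := by
  have := fun m : r.divisors => hfin m m.2
  have := fun m : r.divisors => Fintype.ofFinite (SubgroupsOfIndex M m)
  have := fun K : Σ m : r.divisors, SubgroupsOfIndex M m =>
    finite_quotient_of_mem_subgroupsOfIndex (Nat.pos_of_mem_divisors K.1.2).ne' K.2
  rw [Nat.card_congr (subgroupsOfIndexIntProdEquiv hr), Nat.card_sigma, Fintype.sum_sigma,
    ← Finset.sum_coe_sort r.divisors]
  refine Finset.sum_congr rfl fun m _ => ?_
  have hK (K : SubgroupsOfIndex M m) : Nat.card (M ⧸ K.1) = m := K.2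
  simp [hK, Nat.card_eq_fintype_card, mul_comm]

end IntProd

namespace Nat

theorem sum_finMulAntidiag_succ {β : Type*} [AddCommMonoid β] (d r : ℕ)
    (F : (Fin (d + 1) → ℕ) → β) :
    ∑ f ∈ finMulAntidiag (d + 1) r, F f =
      ∑ m ∈ r.divisors, ∑ g ∈ finMulAntidiag d m, F (Fin.cons (r / m) g) := by
  have mem_succ {f : Fin (d + 1) → ℕ} :
      f ∈ finMulAntidiag (d + 1) r ↔ f 0 * ∏ i : Fin d, f i.succ = r ∧ r ≠ 0 := by
    rw [mem_finMulAntidiag, Fin.prod_univ_succ]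
  have head_eq {f : Fin (d + 1) → ℕ} (hf : f ∈ finMulAntidiag (d + 1) r) :
      r / ∏ i : Fin d, f i.succ = f 0 := by
    obtain ⟨hprod, hr⟩ := mem_succ.mp hf
    exact Nat.div_eq_of_eq_mul_left (Nat.pos_of_ne_zero (right_ne_zero_of_mul (hprod ▸ hr)))
      hprod.symm
  rw [Finset.sum_sigma']
  refine Finset.sum_bij' (fun f _ => ⟨∏ i : Fin d, f i.succ, Fin.tail f⟩)
    (fun p _ => Fin.cons (r / p.1) p.2) (fun f hf => ?_) (fun p hp => ?_) (fun f hf => ?_)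
    (fun p hp => ?_) (fun f hf => ?_)
  · obtain ⟨hprod, hr⟩ := mem_succ.mp hf
    simp only [Finset.mem_sigma, mem_divisors, mem_finMulAntidiag]
    exact ⟨⟨Dvd.intro_left _ hprod, hr⟩, rfl, right_ne_zero_of_mul (hprod ▸ hr)⟩
  · simp only [Finset.mem_sigma, mem_divisors, mem_finMulAntidiag] at hp
    rw [mem_succ]
    simp [hp.2.1, Nat.div_mul_cancel hp.1.1, hp.1.2]
  · simp [head_eq hf]
  · simp [prod_eq_of_mem_finMulAntidiag (Finset.mem_sigma.mp hp).2]
  · simp [head_eq hf]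

theorem sum_finMulAntidiag_succ_prod_pow (d r : ℕ) :
    ∑ f ∈ finMulAntidiag (d + 1) r, ∏ i, f i ^ (i : ℕ) =
      ∑ m ∈ r.divisors, m * ∑ g ∈ finMulAntidiag d m, ∏ i, g i ^ (i : ℕ) := by
  rw [sum_finMulAntidiag_succ]
  refine Finset.sum_congr rfl fun m _ => ?_
  rw [Finset.mul_sum]
  refine Finset.sum_congr rfl fun g hg => ?_
  simp only [Fin.prod_univ_succ, Fin.cons_zero, Fin.cons_succ, Fin.val_zero, pow_zero, one_mul,
    Fin.val_succ, pow_succ, Finset.prod_mul_distrib, prod_eq_of_mem_finMulAntidiag hg, mul_comm]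

theorem filter_piFinset_Icc_prod_eq (d r : ℕ) :
    {f ∈ Fintype.piFinset fun _ : Fin d => Finset.Icc 1 r | ∏ i, f i = r} =
      finMulAntidiag d r := by
  ext f
  simp only [Finset.mem_filter, Fintype.mem_piFinset, Finset.mem_Icc]
  refine ⟨fun ⟨hf, hprod⟩ => mem_finMulAntidiag.mpr ⟨hprod, ?_⟩, fun hf => ⟨fun i => ?_,
    prod_eq_of_mem_finMulAntidiag hf⟩⟩
  · exact hprod ▸ Finset.prod_ne_zero_iff.mpr fun i _ => one_le_iff_ne_zero.mp (hf i).1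
  · exact ⟨one_le_iff_ne_zero.mpr (ne_zero_of_mem_finMulAntidiag hf i),
      le_of_dvd (pos_of_ne_zero (mem_finMulAntidiag.mp hf).2) (dvd_of_mem_finMulAntidiag hf i)⟩

end Nat

theorem finite_subgroupsOfIndex_int_pi (d : ℕ) {r : ℕ} (hr : r ≠ 0) :
    Finite (SubgroupsOfIndex (Fin d → ℤ) r) := by
  induction d generalizing r with
  | zero => infer_instance
  | succ d ih =>
    have := finite_subgroupsOfIndex_int_prod hr fun _ hm => ih (Nat.pos_of_mem_divisors hm).ne'
    exact .of_equiv _ ((Fin.consLinearEquiv ℤ fun _ => ℤ).toAddEquiv.subgroupsOfIndexCongr r)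

theorem jZ_succ (d : ℕ) {r : ℕ} (hr : r ≠ 0) : jZ (d + 1) r = ∑ m ∈ r.divisors, m * jZ d m :=
  (Nat.card_congr
      ((Fin.consLinearEquiv ℤ fun _ => ℤ).toAddEquiv.subgroupsOfIndexCongr r)).symm.trans
    (card_subgroupsOfIndex_int_prod hr fun _ hm =>
      finite_subgroupsOfIndex_int_pi d (Nat.pos_of_mem_divisors hm).ne')

theorem jZ_eq_sum_finMulAntidiag (d : ℕ) {r : ℕ} (hr : r ≠ 0) :
    jZ d r = ∑ f ∈ Nat.finMulAntidiag d r, ∏ i, f i ^ (i : ℕ) := by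
  induction d generalizing r with
  | zero =>
    rw [jZ, card_subgroupsOfIndex_of_subsingleton]
    rcases eq_or_ne r 1 with rfl | hr1
    · simp [Nat.finMulAntidiag_one]
    · simp [Nat.finMulAntidiag_zero_left hr1, hr1]
  | succ d ih =>
    rw [jZ_succ d hr, Nat.sum_finMulAntidiag_succ_prod_pow]
    exact Finset.sum_congr rfl fun _ hm => by rw [ih (Nat.pos_of_mem_divisors hm).ne']

theorem jZ_eq_sum_prod_eq_general (d r : ℕ) (hr : 1 ≤ r) :
    (jZ d r =
        ∑ f ∈ (Fintype.piFinset fun _ : Fin d => Finset.Icc 1 r).filter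
            (fun f => ∏ i, f i = r),
          ∏ i : Fin d, f i ^ (i : ℕ)) ∧
      (2 ≤ d → jZ d r = ∑ m ∈ r.divisors, m * jZ (d - 1) m) := by
  have hr : r ≠ 0 := Nat.one_le_iff_ne_zero.mp hr
  refine ⟨by rw [Nat.filter_piFinset_Icc_prod_eq, jZ_eq_sum_finMulAntidiag d hr], fun hd => ?_⟩
  obtain ⟨d, rfl⟩ : ∃ e, d = e + 1 := ⟨d - 1, by omega⟩
  exact jZ_succ d hr

/-- **Lemma 4-4.** `j_r(ℤ^d) = Σ_{r_1⋯r_d = r} r_2·r_3²⋯r_d^{d-1}`, the sum being over all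
`d`-tuples of positive integers with product `r`; and for `d ≥ 2`,
`j_r(ℤ^d) = Σ_{m ∣ r} m·j_m(ℤ^{d-1})`. -/
theorem jZ_eq_sum_prod_eq (d r : ℕ) (hd : 1 ≤ d) (hr : 1 ≤ r) :
    (jZ d r =
        ∑ f ∈ (Fintype.piFinset fun _ : Fin d => Finset.Icc 1 r).filter
            (fun f => ∏ i, f i = r),
          ∏ i : Fin d, f i ^ (i : ℕ)) ∧
      (2 ≤ d → jZ d r = ∑ m ∈ r.divisors, m * jZ (d - 1) m) :=
  jZ_eq_sum_prod_eq_general d r hr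
end

section
/- For every integer d ≥ 1 and every complex number s with Re(s) > d, the Dirichlet series Σ_{n≥1} j_n(ℤ^d) · n^{−s} converges and equals ζ(s) · ζ(s−1) ⋯ ζ(s−d+1), the product of the values of the Riemann zeta function at s, s−1, …, s−d+1. -/
/-!
A finite-index subgroup `H` of `M × ℤ` is determined by `K = H ∩ M`, the generator `a > 0` of
its image in `ℤ`, and the class `c ∈ M ⧸ K` of any `w` with `(w, a) ∈ H`; every such triple
occurs, and `[M × ℤ : H] = a · [M : K]`. Hence `j_n(M × ℤ) = ∑_{ab = n} b · j_b(M)`, so the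
Dirichlet series of `j(M × ℤ)` at `s` is `ζ(s)` times that of `j(M)` at `s - 1`. Induction on `d`,
starting from the trivial group whose series is `1`, gives the product of shifted zeta values.
-/

open AddSubgroup

namespace AddSubgroup

variable {G G' : Type*} [AddGroup G] [AddGroup G']

lemma range_inl_eq_ker_snd : (AddMonoidHom.inl G G').range = (AddMonoidHom.snd G G').ker := by
  ext ⟨x, y⟩
  simp [eq_comm, mem_prod]

lemma index_eq_index_comap_inl_mul_index_map_snd (H : AddSubgroup (G × G')) [H.Normal] :
    H.index =
      (H.comap (AddMonoidHom.inl G G')).index * (H.map (AddMonoidHom.snd G G')).index := by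
  rw [index_comap, range_inl_eq_ker_snd, index_map,
    AddMonoidHom.range_eq_top.mpr Prod.snd_surjective, index_top, mul_one,
    ← relIndex_sup_left, relIndex_mul_index le_sup_left]

end AddSubgroup

lemma Int.exists_eq_zmultiples_natCast (L : AddSubgroup ℤ) : ∃ a : ℕ, L = zmultiples (a : ℤ) := by
  obtain ⟨g, hg⟩ := Int.subgroup_cyclic L
  exact ⟨g.natAbs, by rw [hg, ← zmultiples_eq_closure, Int.zmultiples_natAbs]⟩

def AddEquiv.subgroupsIndexEquiv {G G' : Type*} [AddGroup G] [AddGroup G'] (e : G ≃+ G')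
    (r : ℕ) : {H : AddSubgroup G // H.index = r} ≃ {H : AddSubgroup G' // H.index = r} :=
  e.mapAddSubgroup.toEquiv.subtypeEquiv fun H => by simp [index_map_equiv]

section ProdInt

variable {M : Type*} [AddCommGroup M]

noncomputable def zmultiplesComap (K : AddSubgroup M) (a : ℕ) (c : M ⧸ K) :
    AddSubgroup (M × ℤ) :=
  (zmultiples (c, (a : ℤ))).comap ((QuotientAddGroup.mk' K).prodMap (AddMonoidHom.id ℤ))

section zmultiplesComap

variable {K : AddSubgroup M} {a : ℕ} {c : M ⧸ K}

lemma mem_zmultiplesComap {p : M × ℤ} :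
    p ∈ zmultiplesComap K a c ↔ ∃ k : ℤ, k • c = p.1 ∧ k * a = p.2 := by
  simp [zmultiplesComap, mem_zmultiples_iff, Prod.ext_iff]

lemma comap_inl_zmultiplesComap (ha : a ≠ 0) :
    (zmultiplesComap K a c).comap (AddMonoidHom.inl M ℤ) = K := by
  ext x
  simp [mem_zmultiplesComap, ha, eq_comm (a := (0 : M ⧸ K))]

lemma map_snd_zmultiplesComap :
    (zmultiplesComap K a c).map (AddMonoidHom.snd M ℤ) = zmultiples (a : ℤ) := by
  ext t
  simp only [mem_map, mem_zmultiplesComap, Int.mem_zmultiples_iff, AddMonoidHom.coe_snd]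
  constructor
  · rintro ⟨p, ⟨k, -, hk⟩, rfl⟩
    exact ⟨k, by rw [← hk, mul_comm]⟩
  · rintro ⟨k, rfl⟩
    obtain ⟨x, hx⟩ := QuotientAddGroup.mk_surjective (k • c)
    exact ⟨(x, a * k), ⟨k, hx.symm, mul_comm _ _⟩, rfl⟩

lemma index_zmultiplesComap (ha : a ≠ 0) : (zmultiplesComap K a c).index = K.index * a := by
  rw [index_eq_index_comap_inl_mul_index_map_snd, comap_inl_zmultiplesComap ha,
    map_snd_zmultiplesComap, Int.index_zmultiples, Int.natAbs_natCast]

lemma zmultiplesComap_injective (ha : a ≠ 0) : Function.Injective (zmultiplesComap K a) := by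
  intro c c' h
  have hc : ((c.out, (a : ℤ)) : M × ℤ) ∈ zmultiplesComap K a c' :=
    h ▸ mem_zmultiplesComap.mpr ⟨1, by simp, one_mul _⟩
  obtain ⟨k, hk, hka⟩ := mem_zmultiplesComap.mp hc
  obtain rfl : k = 1 := by simpa [ha] using hka
  simpa using hk.symm

lemma exists_eq_zmultiplesComap (H : AddSubgroup (M × ℤ)) (hH : H.index ≠ 0) :
    ∃ (a : ℕ) (c : M ⧸ H.comap (AddMonoidHom.inl M ℤ)), a ≠ 0 ∧
      zmultiplesComap (H.comap (AddMonoidHom.inl M ℤ)) a c = H := by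
  obtain ⟨a, hLa⟩ := Int.exists_eq_zmultiples_natCast (H.map (AddMonoidHom.snd M ℤ))
  have hindex := index_eq_index_comap_inl_mul_index_map_snd H
  rw [hLa, Int.index_zmultiples, Int.natAbs_natCast] at hindex
  have ha : a ≠ 0 := right_ne_zero_of_mul (hindex ▸ hH)
  obtain ⟨⟨w, t⟩, hwH, rfl : t = a⟩ : (a : ℤ) ∈ H.map (AddMonoidHom.snd M ℤ) :=
    hLa ▸ mem_zmultiples _
  refine ⟨a, w, ha, ?_⟩
  have hle : zmultiplesComap (H.comap (AddMonoidHom.inl M ℤ)) a w ≤ H := by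
    rintro ⟨x, t⟩ hxt
    obtain ⟨k, hk, rfl⟩ := mem_zmultiplesComap.mp hxt
    have hxw : (k • w - x, (0 : ℤ)) ∈ H := by
      simpa [← QuotientAddGroup.mk_zsmul, QuotientAddGroup.eq_iff_sub_mem, neg_add_eq_sub] using hk
    simpa [mul_comm] using sub_mem (zsmul_mem hwH k) hxw
  -- both subgroups have index `[M : K] * a`, and one contains the other
  have hrel := relIndex_mul_index hle
  rw [index_zmultiplesComap ha, ← hindex, mul_eq_right₀ hH, relIndex_eq_one] at hrel
  exact le_antisymm hle hrel

end zmultiplesComap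

variable (M) in
noncomputable def subgroupsProdIntEquiv (n : ℕ) (hn : n ≠ 0) :
    (Σ p : n.divisorsAntidiagonal, Σ K : {K : AddSubgroup M // K.index = p.1.2}, M ⧸ K.1) ≃
      {H : AddSubgroup (M × ℤ) // H.index = n} :=
  Equiv.ofBijective
    (fun x => ⟨zmultiplesComap x.2.1.1 x.1.1.1 x.2.2, by
      rw [index_zmultiplesComap (Nat.left_ne_zero_of_mem_divisorsAntidiagonal x.1.2), x.2.1.2,
        mul_comm, (Nat.mem_divisorsAntidiagonal.mp x.1.2).1]⟩)
    ⟨by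
      rintro ⟨⟨⟨a, b⟩, hp⟩, ⟨K, hK⟩, c⟩ ⟨⟨⟨a', b'⟩, hp'⟩, ⟨K', hK'⟩, c'⟩ h
      have h : zmultiplesComap K a c = zmultiplesComap K' a' c' := congrArg Subtype.val h
      have ha : a ≠ 0 := Nat.left_ne_zero_of_mem_divisorsAntidiagonal hp
      obtain rfl : a = a' := by
        simpa [map_snd_zmultiplesComap, Int.index_zmultiples] using
          congrArg (fun H => (H.map (AddMonoidHom.snd M ℤ)).index) h
      obtain rfl : K = K' := by
        simpa only [comap_inl_zmultiplesComap ha] using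
          congrArg (comap (AddMonoidHom.inl M ℤ)) h
      obtain rfl : b = b' := hK.symm.trans hK'
      obtain rfl : c = c' := zmultiplesComap_injective ha h
      rfl,
    by
      rintro ⟨H, hH⟩
      obtain ⟨a, c, ha, hHac⟩ := exists_eq_zmultiplesComap H (hH ▸ hn)
      have hmem : (a, (H.comap (AddMonoidHom.inl M ℤ)).index) ∈ n.divisorsAntidiagonal := by
        rw [Nat.mem_divisorsAntidiagonal, mul_comm, ← index_zmultiplesComap ha, hHac, hH]
        exact ⟨rfl, hn⟩
      exact ⟨⟨⟨_, hmem⟩, ⟨_, rfl⟩, c⟩, Subtype.ext hHac⟩⟩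

lemma finite_subgroups_prod_int (hfin : ∀ b ≠ 0, Finite {K : AddSubgroup M // K.index = b})
    {n : ℕ} (hn : n ≠ 0) : Finite {H : AddSubgroup (M × ℤ) // H.index = n} :=
  have (p : n.divisorsAntidiagonal) := hfin _ (Nat.right_ne_zero_of_mem_divisorsAntidiagonal p.2)
  have (p : n.divisorsAntidiagonal) (K : {K : AddSubgroup M // K.index = p.1.2}) :
      Finite (M ⧸ K.1) :=
    index_ne_zero_iff_finite.mp (K.2.trans_ne (Nat.right_ne_zero_of_mem_divisorsAntidiagonal p.2))
  .of_equiv _ (subgroupsProdIntEquiv M n hn)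

lemma card_subgroups_prod_int (hfin : ∀ b ≠ 0, Finite {K : AddSubgroup M // K.index = b})
    {n : ℕ} (hn : n ≠ 0) :
    Nat.card {H : AddSubgroup (M × ℤ) // H.index = n} =
      ∑ p ∈ n.divisorsAntidiagonal, p.2 * Nat.card {K : AddSubgroup M // K.index = p.2} := by
  have (p : n.divisorsAntidiagonal) := hfin _ (Nat.right_ne_zero_of_mem_divisorsAntidiagonal p.2)
  have (p : n.divisorsAntidiagonal) (K : {K : AddSubgroup M // K.index = p.1.2}) :
      Finite (M ⧸ K.1) :=
    index_ne_zero_iff_finite.mp (K.2.trans_ne (Nat.right_ne_zero_of_mem_divisorsAntidiagonal p.2))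
  rw [← Nat.card_congr (subgroupsProdIntEquiv M n hn), Nat.card_sigma,
    ← Finset.sum_coe_sort n.divisorsAntidiagonal]
  refine Finset.sum_congr rfl fun p _ => ?_
  have : Fintype {K : AddSubgroup M // K.index = p.1.2} := .ofFinite _
  simp only [Nat.card_sigma, ← index_eq_card]
  rw [Finset.sum_congr rfl fun K _ => K.2, Finset.sum_const, Finset.card_univ, smul_eq_mul,
    mul_comm, Nat.card_eq_fintype_card]

end ProdInt

def finSuccAddEquivProd (d : ℕ) : (Fin (d + 1) → ℤ) ≃+ (Fin d → ℤ) × ℤ :=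
  ((Fin.consLinearEquiv ℤ fun _ : Fin (d + 1) => ℤ).symm.trans
    (LinearEquiv.prodComm ℤ _ _)).toAddEquiv

lemma jZ_zero (n : ℕ) : jZ 0 n = if n = 1 then 1 else 0 := by
  have hindex (H : AddSubgroup (Fin 0 → ℤ)) : H.index = 1 :=
    index_eq_one.mpr (Subsingleton.elim _ _)
  split_ifs with hn
  · exact Nat.card_eq_one_iff_unique.mpr ⟨inferInstance, ⟨⟨⊤, hn ▸ index_top⟩⟩⟩
  · have : IsEmpty {H : AddSubgroup (Fin 0 → ℤ) // H.index = n} := ⟨fun H => hn (H.2 ▸ hindex H)⟩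
    exact Nat.card_of_isEmpty

lemma finite_subgroups_fin_int (d : ℕ) :
    ∀ b ≠ 0, Finite {K : AddSubgroup (Fin d → ℤ) // K.index = b} := by
  induction d with
  | zero => intro b _; infer_instance
  | succ d ih =>
    intro b hb
    exact .of_equiv _ ((finSuccAddEquivProd d).subgroupsIndexEquiv b).symm
      (h := finite_subgroups_prod_int ih hb)

lemma jZ_succ_s4 (d : ℕ) {n : ℕ} (hn : n ≠ 0) :
    jZ (d + 1) n = ∑ p ∈ n.divisorsAntidiagonal, p.2 * jZ d p.2 := by
  rw [jZ, Nat.card_congr ((finSuccAddEquivProd d).subgroupsIndexEquiv n),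
    card_subgroups_prod_int (finite_subgroups_fin_int d) hn]
  rfl

open LSeries LSeries.notation

lemma LSeries.term_natCast_mul (f : ℕ → ℂ) (s : ℂ) (n : ℕ) :
    term (fun m => m * f m) s n = term f (s - 1) n := by
  rcases eq_or_ne n 0 with rfl | hn
  · simp
  · rw [term_of_ne_zero hn, term_of_ne_zero hn, Complex.cpow_sub _ _ (Nat.cast_ne_zero.mpr hn),
      Complex.cpow_one, div_div_eq_mul_div]
    ring

lemma LSeriesHasSum_jZ (d : ℕ) {s : ℂ} (hs : d < s.re) :
    LSeriesHasSum (fun n => (jZ d n : ℂ)) s (∏ i ∈ Finset.range d, riemannZeta (s - i)) := by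
  induction d generalizing s with
  | zero =>
    rw [Finset.prod_range_zero, LSeriesHasSum_congr s 1 (g := δ) fun _ => by
      simp [jZ_zero, LSeries.delta]]
    unfold LSeriesHasSum
    rw [funext (term_delta s)]
    exact hasSum_ite_eq 1 1
  | succ d ih =>
    have hmul : LSeriesHasSum (fun n => n * (jZ d n : ℂ)) s
        (∏ i ∈ Finset.range d, riemannZeta (s - 1 - i)) := by
      simpa only [LSeriesHasSum, funext (term_natCast_mul _ s)] using
        ih (s := s - 1) (by simp only [Complex.sub_re, Complex.one_re]; push_cast at hs; linarith)
    have hconv := (LSeriesHasSum_one (s := s) (by push_cast at hs; linarith)).convolution hmul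
    rw [LSeriesHasSum_congr s _ (g := 1 ⍟ fun n => n * (jZ d n : ℂ)) fun hn => by
      simp [jZ_succ_s4 d hn, convolution_def]]
    convert hconv using 1
    rw [Finset.prod_range_succ', mul_comm]
    simp [sub_add_eq_sub_sub_swap]

theorem hasSum_jZ_div_cpow_general (d : ℕ) (s : ℂ) (hs : (d : ℝ) < s.re) :
    HasSum (fun n : ℕ => (jZ d (n + 1) : ℂ) * ((n + 1 : ℕ) : ℂ) ^ (-s))
      (∏ i ∈ Finset.range d, riemannZeta (s - (i : ℂ))) := by
  simpa [term_of_ne_zero, Complex.cpow_neg, div_eq_mul_inv] using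
    (hasSum_nat_add_iff' 1).mpr (LSeriesHasSum_jZ d hs)

/-- Formula (1-10): for `Re(s) > d`, the Dirichlet series `Σ_{n≥1} j_n(ℤ^d)/n^s` converges to
`ζ(s)·ζ(s-1)⋯ζ(s-d+1)`. -/
theorem hasSum_jZ_div_cpow (d : ℕ) (hd : 1 ≤ d) (s : ℂ) (hs : (d : ℝ) < s.re) :
    HasSum (fun n : ℕ => (jZ d (n + 1) : ℂ) * ((n + 1 : ℕ) : ℂ) ^ (-s))
      (∏ i ∈ Finset.range d, riemannZeta (s - (i : ℂ))) :=
  hasSum_jZ_div_cpow_general d s hs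
end

section
/- Let K be a finitely generated group, let G₁ and G₂ be finite groups acting on finite sets X₁ and X₂ respectively, and let G₁×G₂ act on X₁×X₂ componentwise. Then χ_K(X₁×X₂; G₁×G₂) = χ_K(X₁; G₁) · χ_K(X₂; G₂). -/
/-- The generalized orbifold Euler characteristic `χ_K(X;G)` associated to a group `K`:
`(1/|G|) Σ_{φ ∈ Hom(K×ℤ,G)} |X^{⟨φ⟩}|`. -/
noncomputable def chiGen (K : Type*) [Group K] (G : Type*) [Group G] (X : Type*)
    [MulAction G X] : ℚ :=
  (Nat.card G : ℚ)⁻¹ *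
    ∑ᶠ φ : (K × Multiplicative ℤ) →* G,
      (Nat.card {x : X // ∀ k, φ k • x = x} : ℚ)

/-- The componentwise action of `G₁ × G₂` on `X₁ × X₂`. -/
instance prodComponentwiseAction (G₁ G₂ X₁ X₂ : Type*) [Group G₁] [Group G₂]
    [MulAction G₁ X₁] [MulAction G₂ X₂] : MulAction (G₁ × G₂) (X₁ × X₂) where
  smul g x := (g.1 • x.1, g.2 • x.2)
  one_smul x := by
    show ((1 : G₁) • x.1, (1 : G₂) • x.2) = x
    simp
  mul_smul a b x := by
    show ((a.1 * b.1) • x.1, (a.2 * b.2) • x.2)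
        = ((a.1 • b.1 • x.1, a.2 • b.2 • x.2) : X₁ × X₂)
    simp [mul_smul]

/-!
A homomorphism `K × ℤ → G₁ × G₂` is the same as a pair of homomorphisms `K × ℤ → G₁` and
`K × ℤ → G₂`, and a point of `X₁ × X₂` is fixed by the image of the pair exactly when each
coordinate is fixed by the image of the corresponding homomorphism. Hence the sum defining
`χ_K(X₁ × X₂; G₁ × G₂)` factors as the product of the two sums, as does `|G₁ × G₂|`. The sums are
finite because a homomorphism out of a finitely generated group is determined by its values on
finitely many generators.
-/

open Function

theorem finsum_mul_finsum {α β R : Type*} [NonUnitalNonAssocSemiring R] {f : α → R} {g : β → R}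
    (hf : (support f).Finite) (hg : (support g).Finite) :
    (∑ᶠ a, f a) * (∑ᶠ b, g b) = ∑ᶠ p : α × β, f p.1 * g p.2 := by
  have hfg : (support fun p : α × β => f p.1 * g p.2).Finite :=
    (hf.prod hg).subset fun p hp =>
      ⟨left_ne_zero_of_mul hp, right_ne_zero_of_mul hp⟩
  rw [finsum_mul' f _ hf, finsum_curry _ hfg]
  exact finsum_congr fun a => mul_finsum' g (f a) hg

instance MonoidHom.finite_of_fg {M N : Type*} [Monoid M] [Monoid.FG M] [Monoid N] [Finite N] :
    Finite (M →* N) := by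
  obtain ⟨S, hS, hSf⟩ := Monoid.fg_iff.mp ‹Monoid.FG M›
  have := hSf.to_subtype
  refine Finite.of_injective (fun φ : M →* N => fun s : S => φ s) fun φ ψ h => ?_
  exact MonoidHom.eq_of_eqOn_denseM hS fun s hs => congrFun h ⟨s, hs⟩

def MonoidHom.prodEquiv {M N P : Type*} [MulOneClass M] [MulOneClass N] [MulOneClass P] :
    (M →* N) × (M →* P) ≃ (M →* N × P) where
  toFun p := p.1.prod p.2
  invFun φ := ((fst N P).comp φ, (snd N P).comp φ)
  left_inv p := by simp only [fst_comp_prod, snd_comp_prod]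
  right_inv := prod_unique

section FixedPoints

variable {ι G₁ G₂ X₁ X₂ : Type*} [Group G₁] [Group G₂] [MulAction G₁ X₁] [MulAction G₂ X₂]

def fixedPointsProdEquiv (a : ι → G₁) (b : ι → G₂) :
    {x : X₁ × X₂ // ∀ i, (a i, b i) • x = x} ≃
      {x : X₁ // ∀ i, a i • x = x} × {x : X₂ // ∀ i, b i • x = x} :=
  (Equiv.subtypeEquivRight fun _ => by
      simp only [Prod.ext_iff, forall_and]; rfl).trans
    Equiv.subtypeProdEquivProd

theorem card_fixedPoints_prod (a : ι → G₁) (b : ι → G₂) :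
    Nat.card {x : X₁ × X₂ // ∀ i, (a i, b i) • x = x} =
      Nat.card {x : X₁ // ∀ i, a i • x = x} * Nat.card {x : X₂ // ∀ i, b i • x = x} := by
  rw [Nat.card_congr (fixedPointsProdEquiv a b), Nat.card_prod]

end FixedPoints

theorem chiGen_prod_general (K : Type) [Group K] [Group.FG K]
    (G₁ G₂ X₁ X₂ : Type) [Group G₁] [Group G₂] [Finite G₁] [Finite G₂]
    [MulAction G₁ X₁] [MulAction G₂ X₂] :
    chiGen K (G₁ × G₂) (X₁ × X₂) = chiGen K G₁ X₁ * chiGen K G₂ X₂ := by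
  have hsum : ∑ᶠ φ : K × Multiplicative ℤ →* G₁ × G₂,
        (Nat.card {x : X₁ × X₂ // ∀ k, φ k • x = x} : ℚ) =
      (∑ᶠ φ : K × Multiplicative ℤ →* G₁, (Nat.card {x : X₁ // ∀ k, φ k • x = x} : ℚ)) *
        ∑ᶠ ψ : K × Multiplicative ℤ →* G₂, (Nat.card {x : X₂ // ∀ k, ψ k • x = x} : ℚ) := by
    rw [finsum_mul_finsum (Set.toFinite _) (Set.toFinite _),
      ← finsum_comp_equiv MonoidHom.prodEquiv]
    exact finsum_congr fun p => mod_cast card_fixedPoints_prod p.1 p.2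
  rw [chiGen, chiGen, chiGen, hsum, Nat.card_prod, Nat.cast_mul, mul_inv]
  ring

/-- **Proposition 2-1** (first part): the generalized orbifold Euler characteristic is
multiplicative: `χ_K(X₁×X₂; G₁×G₂) = χ_K(X₁;G₁)·χ_K(X₂;G₂)`. -/
theorem chiGen_prod (K : Type) [Group K] [Group.FG K]
    (G₁ G₂ X₁ X₂ : Type) [Group G₁] [Group G₂] [Finite G₁] [Finite G₂]
    [MulAction G₁ X₁] [MulAction G₂ X₂] [Finite X₁] [Finite X₂] :
    chiGen K (G₁ × G₂) (X₁ × X₂) = chiGen K G₁ X₁ * chiGen K G₂ X₂ :=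
  chiGen_prod_general K G₁ G₂ X₁ X₂
end

section
/- Let d ≥ 1 be an integer and let G be a finite group acting on a finite set X. Then χ^{(d)}(X;G) = Σ_{[g]} χ^{(d−1)}(X^{⟨g⟩}; C_G(g)), where the sum is over the conjugacy classes [g] of G, X^{⟨g⟩} = {x ∈ X : g·x = x} is the fixed-point set of g with the restricted action of the centralizer C_G(g), and the summand is independent of the choice of representative g of its conjugacy class. -/
open scoped Classical in
/-- The `d`-th order orbifold Euler characteristic `χ^{(d)}(X;G)`. -/
noncomputable def orbChi (d : ℕ) (G : Type*) [Group G] (X : Type*) [MulAction G X] : ℚ :=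
  (Nat.card G : ℚ)⁻¹ *
    ∑ᶠ g : Fin (d + 1) → G,
      if ∀ i j, Commute (g i) (g j) then
        (Nat.card {x : X // ∀ i, g i • x = x} : ℚ) else 0

/-- `X^{⟨g⟩}`: the fixed point set of `g` on `X`. -/
def fixedBy1 {G : Type*} [Group G] (g : G) (X : Type*) [MulAction G X] : Type _ :=
  {x : X // g • x = x}

/-- The centralizer `C_G(g)` acts on the fixed point set `X^{⟨g⟩}`. -/
instance centralizerFixedBy1Action {G : Type*} [Group G] (g : G) (X : Type*)
    [MulAction G X] : MulAction ↥(Subgroup.centralizer {g}) (fixedBy1 g X) where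
  smul c x := ⟨(c : G) • x.1, by
    have hc : g * (c : G) = (c : G) * g :=
      Subgroup.mem_centralizer_iff.mp c.2 g rfl
    rw [← mul_smul, hc, mul_smul, x.2]⟩
  one_smul x := Subtype.ext <| by
    show ((1 : ↥(Subgroup.centralizer {g})) : G) • x.1 = x.1
    simp
  mul_smul a b x := Subtype.ext <| by
    show ((a * b : ↥(Subgroup.centralizer {g})) : G) • x.1 = (a : G) • (b : G) • x.1
    simp [mul_smul]

/-!
Splitting off the first entry `a` of a commuting tuple `(a, t₁, …, t_d)`, the remaining entries
form a commuting tuple in `C_G(a)`, and their common fixed points on `X^a` are those of the whole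
tuple; hence `|G| χ^{(d)}(X;G) = Σ_a |C_G(a)| χ^{(d-1)}(X^a; C_G(a))`. Conjugation by `k`
identifies `(C_G(g), X^g)` with `(C_G(kgk⁻¹), X^{kgk⁻¹})`, so the summand is a class function, and
since the class of `g` has `|G| / |C_G(g)|` elements, grouping the sum by conjugacy classes gives
the formula.
-/

open Subgroup

theorem Fin.commute_cons_iff {M : Type*} [Mul M] {n : ℕ} (a : M) (t : Fin n → M) :
    (∀ i j, Commute ((Fin.cons a t : Fin (n + 1) → M) i) ((Fin.cons a t : Fin (n + 1) → M) j)) ↔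
      (∀ i, Commute a (t i)) ∧ ∀ i j, Commute (t i) (t j) := by
  simp [Fin.forall_fin_succ, Commute.refl, Commute.symm_iff, forall_and]

section Centralizer

variable {G : Type*} [Group G]

theorem Subgroup.conj_mem_centralizer {g c : G} (k : G) (hc : c ∈ centralizer {g}) :
    k * c * k⁻¹ ∈ centralizer {k * g * k⁻¹} := by
  rw [mem_centralizer_singleton_iff] at hc ⊢
  simp only [mul_assoc, inv_mul_cancel_left]
  rw [← mul_assoc c, hc, mul_assoc]

def Subgroup.centralizerConjEquiv (k g : G) :
    centralizer {g} ≃* centralizer {k * g * k⁻¹} where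
  toFun c := ⟨k * c * k⁻¹, conj_mem_centralizer k c.2⟩
  invFun c := ⟨k⁻¹ * c * k, by simpa [mul_assoc] using conj_mem_centralizer k⁻¹ c.2⟩
  left_inv c := by ext; simp [mul_assoc]
  right_inv c := by ext; simp [mul_assoc]
  map_mul' a b := by ext; simp [mul_assoc]

theorem Subgroup.card_centralizer_eq_of_isConj {g h : G} (hgh : IsConj g h) :
    Nat.card (centralizer {g}) = Nat.card (centralizer {h}) := by
  obtain ⟨k, rfl⟩ := isConj_iff.mp hgh
  exact Nat.card_congr (centralizerConjEquiv k g).toEquiv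

theorem Subgroup.card_isConj_mul_card_centralizer (g : G) :
    Nat.card {a // IsConj a g} * Nat.card (centralizer {g}) = Nat.card G := by
  have hclass : Nat.card {a // IsConj a g} = (MulAction.stabilizer (ConjAct G) g).index := by
    rw [MulAction.index_stabilizer, ← Nat.card_coe_set_eq]
    exact Nat.card_congr (Equiv.subtypeEquivRight fun a => ConjAct.mem_orbit_conjAct.symm)
  rw [mul_comm, nat_card_centralizer_nat_card_stabilizer, hclass, card_mul_index]
  rfl

theorem finsum_card_centralizer_smul [Finite G] {M : Type*} [AddCommMonoid M] (f : G → M)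
    (hf : ∀ g h, IsConj g h → f g = f h) :
    ∑ᶠ a, Nat.card (centralizer {a}) • f a =
      Nat.card G • ∑ᶠ c : Quotient (IsConj.setoid G), f c.out := by
  classical
  have := Fintype.ofFinite G
  rw [finsum_eq_sum_of_fintype, finsum_eq_sum_of_fintype, Finset.smul_sum,
    ← Fintype.sum_fiberwise (fun a => (⟦a⟧ : Quotient (IsConj.setoid G)))]
  refine Fintype.sum_congr _ _ fun c => ?_
  have hclass (a : G) : (⟦a⟧ : Quotient (IsConj.setoid G)) = c ↔ IsConj a c.out := by
    conv_lhs => rw [← c.out_eq]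
    exact Quotient.eq
  calc ∑ a : {a // ⟦a⟧ = c}, Nat.card (centralizer {(a : G)}) • f a
      = ∑ _a : {a // ⟦a⟧ = c}, Nat.card (centralizer {c.out}) • f c.out :=
        Fintype.sum_congr _ _ fun a => by
          have ha := (hclass a).mp a.2
          rw [card_centralizer_eq_of_isConj ha, hf _ _ ha]
    _ = Nat.card {a // IsConj a c.out} • Nat.card (centralizer {c.out}) • f c.out := by
        rw [Finset.sum_const, Finset.card_univ, ← Nat.card_eq_fintype_card,
          Nat.card_congr (Equiv.subtypeEquivRight hclass)]
    _ = Nat.card G • f c.out := by rw [smul_smul, card_isConj_mul_card_centralizer]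

end Centralizer

open scoped Classical in
noncomputable def commutingFixedCard {G : Type*} [Group G] {n : ℕ} (X : Type*) [MulAction G X]
    (g : Fin n → G) : ℚ :=
  if ∀ i j, Commute (g i) (g j) then (Nat.card {x : X // ∀ i, g i • x = x} : ℚ) else 0

theorem card_mul_orbChi (d : ℕ) (G : Type*) [Group G] [Finite G] (X : Type*) [MulAction G X] :
    Nat.card G * orbChi d G X = ∑ᶠ g : Fin (d + 1) → G, commutingFixedCard X g := by
  rw [orbChi, mul_inv_cancel_left₀ (Nat.cast_ne_zero.mpr Nat.card_pos.ne')]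
  rfl

section Transport

variable {G H : Type*} [Group G] [Group H] {X Y : Type*} [MulAction G X] [MulAction H Y]

theorem commutingFixedCard_congr (e : G ≃* H) (σ : X ≃ Y)
    (hσ : ∀ (g : G) (x : X), σ (g • x) = e g • σ x) {n : ℕ} (g : Fin n → G) :
    commutingFixedCard Y (e ∘ g) = commutingFixedCard X g := by
  classical
  unfold commutingFixedCard
  refine if_congr (by simp [commute_map_iff e.injective]) ?_ rfl
  exact congrArg _ (Nat.card_congr (σ.subtypeEquiv fun x => by simp [← hσ]).symm)

theorem orbChi_congr (e : G ≃* H) (σ : X ≃ Y) (hσ : ∀ (g : G) (x : X), σ (g • x) = e g • σ x)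
    (d : ℕ) : orbChi d G X = orbChi d H Y := by
  rw [orbChi, orbChi, Nat.card_congr e.toEquiv,
    ← finsum_comp_equiv (Equiv.piCongrRight fun _ => e.toEquiv)]
  exact congrArg _ (finsum_congr fun g => (commutingFixedCard_congr e σ hσ g).symm)

end Transport

section FixedPoints

variable {G : Type*} [Group G] {X : Type*} [MulAction G X]

variable (X) in
def fixedBy1ConjEquiv (k g : G) : fixedBy1 g X ≃ fixedBy1 (k * g * k⁻¹) X where
  toFun x := ⟨k • x.1, by simp [mul_smul, x.2]⟩
  invFun y := ⟨k⁻¹ • y.1, by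
    rw [← smul_left_cancel_iff k]
    simpa [mul_smul] using y.2⟩
  left_inv x := Subtype.ext (inv_smul_smul k x.1)
  right_inv y := Subtype.ext (smul_inv_smul k y.1)

variable (X) in
theorem orbChi_centralizer_eq_of_isConj (d : ℕ) {g h : G} (hgh : IsConj g h) :
    orbChi d (centralizer {g}) (fixedBy1 g X) = orbChi d (centralizer {h}) (fixedBy1 h X) := by
  obtain ⟨k, rfl⟩ := isConj_iff.mp hgh
  exact orbChi_congr (centralizerConjEquiv k g) (fixedBy1ConjEquiv X k g)
    (fun c x => Subtype.ext <| show k • (c : G) • x.1 = (k * c * k⁻¹) • k • x.1 by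
      simp [mul_smul]) d

theorem commutingFixedCard_cons_of_not_mem_centralizer {n : ℕ} {a : G} {t : Fin n → G}
    (ht : ∃ i, t i ∉ centralizer {a}) :
    commutingFixedCard X (Fin.cons a t : Fin (n + 1) → G) = 0 := by
  obtain ⟨i, hi⟩ := ht
  rw [commutingFixedCard, if_neg]
  rw [Fin.commute_cons_iff]
  exact fun h => hi (mem_centralizer_singleton_iff.mpr (h.1 i).symm.eq)

theorem commutingFixedCard_cons_coe {n : ℕ} (a : G) (u : Fin n → centralizer {a}) :
    commutingFixedCard X (Fin.cons a (fun i => (u i : G)) : Fin (n + 1) → G) =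
      commutingFixedCard (fixedBy1 a X) u := by
  classical
  have hcomm (i : Fin n) : Commute a (u i) := (mem_centralizer_singleton_iff.mp (u i).2).symm
  refine if_congr ?_ (congrArg _ (Nat.card_congr ?_)) rfl
  · simp [Fin.commute_cons_iff, hcomm]
  · refine (Equiv.subtypeEquivRight fun x => ?_).trans
      ((Equiv.subtypeSubtypeEquivSubtypeInter (fun x : X => a • x = x)
        (fun x => ∀ i, (u i : G) • x = x)).symm.trans
        (Equiv.subtypeEquivRight fun (x : fixedBy1 a X) =>
          forall_congr' fun i => (Subtype.ext_iff (a1 := u i • x) (a2 := x)).symm))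
    simp [Fin.forall_fin_succ]

end FixedPoints

theorem card_mul_orbChi_succ (d : ℕ) (G : Type*) [Group G] [Finite G] (X : Type*)
    [MulAction G X] :
    Nat.card G * orbChi (d + 1) G X =
      ∑ᶠ a : G, Nat.card (centralizer {a}) * orbChi d (centralizer {a}) (fixedBy1 a X) := by
  classical
  have := Fintype.ofFinite G
  simp only [card_mul_orbChi]
  rw [finsum_eq_sum_of_fintype, finsum_eq_sum_of_fintype,
    ← (Fin.consEquiv fun _ => G).sum_comp, Fintype.sum_prod_type]
  refine Fintype.sum_congr _ _ fun a => ?_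
  rw [finsum_eq_sum_of_fintype]
  -- only tuples with all entries in `C_G(a)` contribute, and those are the tuples of `C_G(a)`
  refine (Fintype.sum_of_injective (fun u i => (u i : G)) Subtype.val_injective.comp_left _ _
    (fun t ht => commutingFixedCard_cons_of_not_mem_centralizer ?_)
    (fun u => (commutingFixedCard_cons_coe a u).symm)).symm
  by_contra! h
  exact ht ⟨fun i => ⟨t i, h i⟩, rfl⟩

theorem orbChi_eq_sum_conjClasses_general (d : ℕ) (hd : 1 ≤ d)
    (G X : Type) [Group G] [Finite G] [MulAction G X] :
    (∀ g h : G, IsConj g h →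
      orbChi (d - 1) ↥(Subgroup.centralizer {g}) (fixedBy1 g X) =
        orbChi (d - 1) ↥(Subgroup.centralizer {h}) (fixedBy1 h X)) ∧
      orbChi d G X =
        ∑ᶠ c : Quotient (IsConj.setoid G),
          orbChi (d - 1) ↥(Subgroup.centralizer {Quotient.out c})
            (fixedBy1 (Quotient.out c) X) := by
  obtain ⟨n, rfl⟩ := Nat.exists_eq_add_of_le' hd
  rw [Nat.add_sub_cancel]
  refine ⟨fun g h => orbChi_centralizer_eq_of_isConj X n, ?_⟩
  have hG : (Nat.card G : ℚ) ≠ 0 := Nat.cast_ne_zero.mpr Nat.card_pos.ne'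
  rw [← mul_right_inj' hG, card_mul_orbChi_succ]
  simp only [← nsmul_eq_mul]
  exact finsum_card_centralizer_smul _ fun g h => orbChi_centralizer_eq_of_isConj X n

/-- **Proposition 2-5** (formula (2-11)): the summand is conjugation invariant, and
`χ^{(d)}(X;G) = Σ_{[g]} χ^{(d-1)}(X^{⟨g⟩}; C_G(g))`, the sum being over the conjugacy
classes of `G`. -/
theorem orbChi_eq_sum_conjClasses (d : ℕ) (hd : 1 ≤ d)
    (G X : Type) [Group G] [Finite G] [MulAction G X] [Finite X] :
    (∀ g h : G, IsConj g h →
      orbChi (d - 1) ↥(Subgroup.centralizer {g}) (fixedBy1 g X) =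
        orbChi (d - 1) ↥(Subgroup.centralizer {h}) (fixedBy1 h X)) ∧
      orbChi d G X =
        ∑ᶠ c : Quotient (IsConj.setoid G),
          orbChi (d - 1) ↥(Subgroup.centralizer {Quotient.out c})
            (fixedBy1 (Quotient.out c) X) :=
  orbChi_eq_sum_conjClasses_general d hd G X
end

section
/- Let E be a finitely generated abelian group and let G be a finite group acting on a finite set X. Let μℂ be a ℚ-valued function on the set of abelian subgroups of G satisfying, for every abelian subgroup A ≤ G, Σ_{B abelian, A ≤ B ≤ G} μℂ(B) = |X^A|, and let μ𝒜 be a ℚ-valued function on the set of abelian subgroups of G satisfying, for every abelian subgroup A ≤ G, Σ_{B abelian, A ≤ B ≤ G} μ𝒜(B) = 1. Then χ_E(X;G) = Σ_{B} (|B|/|G|) · |Hom(E,B)| · μℂ(B) = Σ_{A} (|A|/|G|) · μ𝒜(A) · χ_E(X;A), where both sums run over all abelian subgroups of G, Hom(E,B) is the set of group homomorphisms E → B, and χ_E(X;A) is computed with respect to the restricted action of A on X. -/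
open Finset

theorem finsum_cond_eq_sum_filter {α M : Type*} [Fintype α] [AddCommMonoid M] (p : α → Prop)
    [DecidablePred p] (f : α → M) : ∑ᶠ (a : α) (_ : p a), f a = ∑ a with p a, f a :=
  finsum_cond_eq_sum_of_cond_iff f (by simp)

theorem Finset.sum_mul_sum_filter_le_comm {ι α R : Type*} [Fintype ι] [Fintype α] [LE α]
    [DecidableLE α] [CommSemiring R] (p : α → Prop) [DecidablePred p] (r : ι → α) (w : ι → R)
    (μ : α → R) :
    ∑ i, w i * ∑ a with p a ∧ r i ≤ a, μ a = ∑ a with p a, μ a * ∑ i with r i ≤ a, w i := by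
  simp only [sum_filter, mul_sum, mul_ite, mul_zero]
  rw [sum_comm]
  refine sum_congr rfl fun a _ => ?_
  by_cases ha : p a <;> simp [ha, mul_comm]

namespace MonoidHom

variable {K H : Type*} [Group K] [Group H]

instance finite_of_fg_s14 [Group.FG K] [Finite H] : Finite (K →* H) := by
  obtain ⟨S, hS, hfin⟩ := Group.fg_iff.mp ‹Group.FG K›
  have : Finite S := hfin
  exact Finite.of_injective (fun φ : K →* H => fun s : S => φ s) fun φ ψ h =>
    eq_of_eqOn_dense hS fun s hs => congrFun h ⟨s, hs⟩

def coprodEquiv (M N P : Type*) [MulOneClass M] [MulOneClass N] [CommMonoid P] :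
    (M →* P) × (N →* P) ≃ (M × N →* P) where
  toFun f := f.1.coprod f.2
  invFun f := (f.comp (inl M N), f.comp (inr M N))
  left_inv f := by ext <;> simp
  right_inv f := by simp

def codRestrictEquiv (B : Subgroup H) : (K →* B) ≃ {φ : K →* H // φ.range ≤ B} where
  toFun ψ := ⟨B.subtype.comp ψ, by rintro _ ⟨k, rfl⟩; exact (ψ k).2⟩
  invFun φ := (φ : K →* H).codRestrict B fun k => φ.2 ⟨k, rfl⟩
  left_inv _ := rfl
  right_inv _ := rfl

theorem range_isAbelian {K : Type*} [CommGroup K] (φ : K →* H) : φ.range.IsAbelian := by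
  rintro _ ⟨k, rfl⟩ _ ⟨l, rfl⟩
  rw [← map_mul, ← map_mul, mul_comm]

theorem card_fixed_eq_card_fixedPoints_range {X : Type*} [MulAction H X] (φ : K →* H) :
    Nat.card {x : X // ∀ k, φ k • x = x} = Nat.card (MulAction.fixedPoints φ.range X) :=
  Nat.card_congr <| Equiv.subtypeEquivRight fun _ =>
    ⟨fun h ⟨_, k, hk⟩ => hk ▸ h k, fun h k => h ⟨φ k, k, rfl⟩⟩

end MonoidHom

open scoped IsMulCommutative in
theorem Subgroup.card_prod_int_monoidHom_range_le {G : Type*} [Group G] (K : Type*) [Group K]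
    {B : Subgroup G} (hB : B.IsAbelian) :
    Nat.card {φ : K × Multiplicative ℤ →* G // φ.range ≤ B} = Nat.card (K →* B) * Nat.card B := by
  have : IsMulCommutative B := ⟨⟨fun a b => Subtype.ext (hB a a.2 b b.2)⟩⟩
  rw [← Nat.card_congr (MonoidHom.codRestrictEquiv B),
    ← Nat.card_congr (MonoidHom.coprodEquiv K (Multiplicative ℤ) B), Nat.card_prod,
    ← Nat.card_congr (zpowersHom B)]

theorem chiGen_subgroup_eq_sum {G : Type*} [Group G] (K X : Type*) [Group K] [MulAction G X]
    [Fintype (K × Multiplicative ℤ →* G)] (A : Subgroup G) [DecidablePred fun φ :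
      K × Multiplicative ℤ →* G => φ.range ≤ A] :
    chiGen K A X = (Nat.card A : ℚ)⁻¹ *
      ∑ φ : K × Multiplicative ℤ →* G with φ.range ≤ A,
        (Nat.card {x : X // ∀ k, φ k • x = x} : ℚ) := by
  rw [chiGen, ← finsum_cond_eq_sum_filter, ← finsum_subtype_eq_finsum_cond,
    ← finsum_comp_equiv (MonoidHom.codRestrictEquiv A)]
  rfl

theorem chiGen_abelian_moebius_general (E : Type) [CommGroup E] [Group.FG E]
    (G X : Type) [Group G] [Finite G] [MulAction G X]
    (μC μA : Subgroup G → ℚ)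
    (hC : ∀ A : Subgroup G, A.IsAbelian →
      (∑ᶠ (B : Subgroup G) (_ : B.IsAbelian ∧ A ≤ B), μC B) =
        (Nat.card (MulAction.fixedPoints A X) : ℚ))
    (hA : ∀ A : Subgroup G, A.IsAbelian →
      (∑ᶠ (B : Subgroup G) (_ : B.IsAbelian ∧ A ≤ B), μA B) = 1) :
    chiGen E G X =
        ∑ᶠ (B : Subgroup G) (_ : B.IsAbelian),
          (Nat.card B : ℚ) / (Nat.card G : ℚ) * (Nat.card (E →* B) : ℚ) * μC B ∧
      chiGen E G X =
        ∑ᶠ (A : Subgroup G) (_ : A.IsAbelian),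
          (Nat.card A : ℚ) / (Nat.card G : ℚ) * μA A * chiGen E A X := by
  classical
  have := Fintype.ofFinite (E × Multiplicative ℤ →* G)
  have := Fintype.ofFinite (Subgroup G)
  set fix : (E × Multiplicative ℤ →* G) → ℚ := fun φ => Nat.card {x : X // ∀ k, φ k • x = x}
  have hfix (φ) : fix φ = 1 * ∑ B with B.IsAbelian ∧ φ.range ≤ B, μC B := by
    rw [one_mul, ← finsum_cond_eq_sum_filter, hC _ φ.range_isAbelian,
      ← MonoidHom.card_fixed_eq_card_fixedPoints_range]
  have hone (φ) : fix φ = fix φ * ∑ A with A.IsAbelian ∧ φ.range ≤ A, μA A := by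
    rw [← finsum_cond_eq_sum_filter, hA _ φ.range_isAbelian, mul_one]
  have hχ : chiGen E G X = (Nat.card G : ℚ)⁻¹ * ∑ φ, fix φ := by
    rw [chiGen, finsum_eq_sum_of_fintype]
  rw [finsum_cond_eq_sum_filter, finsum_cond_eq_sum_filter, hχ]
  constructor
  · calc (Nat.card G : ℚ)⁻¹ * ∑ φ, fix φ
        = (Nat.card G : ℚ)⁻¹ * ∑ B with B.IsAbelian,
            μC B * ∑ φ : E × Multiplicative ℤ →* G with φ.range ≤ B, 1 := by
          rw [sum_congr rfl fun φ _ => hfix φ, sum_mul_sum_filter_le_comm]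
      _ = _ := by
          rw [mul_sum]
          refine sum_congr rfl fun B hB => ?_
          rw [sum_const, nsmul_one, ← Fintype.card_subtype, ← Nat.card_eq_fintype_card,
            Subgroup.card_prod_int_monoidHom_range_le E (mem_filter.mp hB).2]
          push_cast
          ring
  · calc (Nat.card G : ℚ)⁻¹ * ∑ φ, fix φ
        = (Nat.card G : ℚ)⁻¹ * ∑ A with A.IsAbelian,
            μA A * ∑ φ : E × Multiplicative ℤ →* G with φ.range ≤ A, fix φ := by
          rw [sum_congr rfl fun φ _ => hone φ, sum_mul_sum_filter_le_comm]
      _ = _ := by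
          rw [mul_sum]
          refine sum_congr rfl fun A _ => ?_
          have hA0 : (Nat.card A : ℚ) ≠ 0 := Nat.cast_ne_zero.mpr Nat.card_pos.ne'
          rw [chiGen_subgroup_eq_sum]
          field_simp
          rfl

/-- **Proposition 2-3.** For a finitely generated abelian group `E`, with the abelian Möbius
functions `μℂ` (with `Σ_{A≤B abelian} μℂ(B) = |X^A|`) and `μ𝒜` (with
`Σ_{A≤B abelian} μ𝒜(B) = 1`), one has
`χ_E(X;G) = Σ_B (|B|/|G|)·|Hom(E,B)|·μℂ(B) = Σ_A (|A|/|G|)·μ𝒜(A)·χ_E(X;A)`,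
the sums being over the abelian subgroups of `G`. -/
theorem chiGen_abelian_moebius (E : Type) [CommGroup E] [Group.FG E]
    (G X : Type) [Group G] [Finite G] [MulAction G X] [Finite X]
    (μC μA : Subgroup G → ℚ)
    (hC : ∀ A : Subgroup G, A.IsAbelian →
      (∑ᶠ (B : Subgroup G) (_ : B.IsAbelian ∧ A ≤ B), μC B) =
        (Nat.card (MulAction.fixedPoints A X) : ℚ))
    (hA : ∀ A : Subgroup G, A.IsAbelian →
      (∑ᶠ (B : Subgroup G) (_ : B.IsAbelian ∧ A ≤ B), μA B) = 1) :
    chiGen E G X =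
        ∑ᶠ (B : Subgroup G) (_ : B.IsAbelian),
          (Nat.card B : ℚ) / (Nat.card G : ℚ) * (Nat.card (E →* B) : ℚ) * μC B ∧
      chiGen E G X =
        ∑ᶠ (A : Subgroup G) (_ : A.IsAbelian),
          (Nat.card A : ℚ) / (Nat.card G : ℚ) * μA A * chiGen E A X :=
  chiGen_abelian_moebius_general E G X μC μA hC hA
end

section
/- Let K be a finitely generated group and let G be a finite group acting on a finite set X. Let μ be a ℚ-valued function on the set of all subgroups of G satisfying, for every subgroup P ≤ G, Σ_{H : P ≤ H ≤ G} μ(H) = |X^P|. Then χ_K(X;G) = Σ_{H ≤ G} (|Hom(K×ℤ, H)|/|G|) · μ(H) = Σ_{H ≤ G} (|H|/|G|) · |Hom(K,H)/H| · μ(H), where the sums run over all subgroups H of G, Hom(K×ℤ,H) is the set of group homomorphisms K×ℤ → H, and |Hom(K,H)/H| is the number of orbits of the conjugation action of H on Hom(K,H). -/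
/-- `G` acts on the set of group homomorphisms `K →* G` by conjugation. -/
instance homConjAction (K G : Type*) [Group K] [Group G] : MulAction G (K →* G) where
  smul g φ := ((MulAut.conj g).toMonoidHom.comp φ)
  one_smul φ := by
    ext x
    show (MulAut.conj 1) (φ x) = φ x
    simp
  mul_smul g h φ := by
    ext x
    show (MulAut.conj (g * h)) (φ x) = (MulAut.conj g) ((MulAut.conj h) (φ x))
    simp


open MulAction

theorem MonoidHom.finite_of_fg_s15 (L G : Type*) [Group L] [Group.FG L] [Group G] [Finite G] :
    Finite (L →* G) := by
  obtain ⟨S, hS, hSfin⟩ := Group.fg_iff.mp ‹_›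
  have : Finite S := hSfin
  refine Finite.of_injective (fun φ (s : S) => φ s) fun φ ψ h => ?_
  exact MonoidHom.eq_of_eqOn_dense hS fun x hx => congrFun h ⟨x, hx⟩

def MonoidHom.rangeLeEquiv (L : Type*) {G : Type*} [Group L] [Group G] (H : Subgroup G) :
    {φ : L →* G // φ.range ≤ H} ≃ (L →* H) where
  toFun φ := φ.1.codRestrict H fun l => φ.2 ⟨l, rfl⟩
  invFun ψ := ⟨H.subtype.comp ψ, by rintro _ ⟨l, rfl⟩; exact (ψ l).2⟩
  left_inv _ := rfl
  right_inv _ := rfl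

theorem MulAction.fixedPoints_range {L G X : Type*} [Group L] [Group G] [MulAction G X]
    (φ : L →* G) : fixedPoints φ.range X = {x | ∀ l, φ l • x = x} := by
  ext x
  simp [mem_fixedPoints, MonoidHom.mem_range]

theorem finsum_finsum_le_eq_finsum_card_smul {ι α M : Type*} [LE α] [Finite ι] [Finite α]
    [AddCommMonoid M] (r : ι → α) (μ : α → M) :
    ∑ᶠ i, ∑ᶠ (a) (_ : r i ≤ a), μ a = ∑ᶠ a, Nat.card {i // r i ≤ a} • μ a := by
  classical
  cases nonempty_fintype ι
  cases nonempty_fintype α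
  simp only [finsum_eq_sum_of_fintype, finsum_eq_if, Nat.card_eq_fintype_card,
    Fintype.card_subtype]
  rw [Finset.sum_comm]
  simp [Finset.sum_ite]

theorem MulAction.mem_fixedBy_conj_iff {K H : Type*} [Group K] [Group H] (h : H) (f : K →* H) :
    f ∈ fixedBy (K →* H) h ↔ ∀ k, Commute h (f k) := by
  simp only [mem_fixedBy, DFunLike.ext_iff, Commute, SemiconjBy]
  refine forall_congr' fun k => ?_
  change h * f k * h⁻¹ = f k ↔ _
  rw [mul_inv_eq_iff_eq_mul]

def MonoidHom.prodMultiplicativeIntEquiv (K H : Type*) [Group K] [Group H] :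
    (K × Multiplicative ℤ →* H) ≃ Σ h : H, fixedBy (K →* H) h where
  toFun φ := ⟨φ (1, .ofAdd 1), φ.comp (inl K _), (mem_fixedBy_conj_iff _ _).2 fun _ =>
    ((commute_inl_inr _ _).map φ).symm⟩
  invFun p := p.2.1.noncommCoprod (zpowersHom H p.1) fun k n =>
    (((mem_fixedBy_conj_iff _ _).1 p.2.2 k).zpow_left _).symm
  left_inv φ := by
    have : zpowersHom H (φ (1, .ofAdd 1)) = φ.comp (inr K _) := MonoidHom.ext_mint (by simp)
    simp only [this]
    exact noncommCoprod_unique φ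
  right_inv p := Sigma.subtype_ext
    (show p.2.1 1 * zpowersHom H p.1 (.ofAdd 1) = p.1 by simp) (noncommCoprod_comp_inl ..)

theorem MonoidHom.card_prodMultiplicativeInt (K H : Type*) [Group K] [Group.FG K] [Group H]
    [Finite H] :
    Nat.card (K × Multiplicative ℤ →* H) =
      Nat.card H * Nat.card (Quotient (orbitRel H (K →* H))) := by
  classical
  have := MonoidHom.finite_of_fg_s15 K H
  cases nonempty_fintype H
  cases nonempty_fintype (K →* H)
  rw [Nat.card_congr (prodMultiplicativeIntEquiv K H), Nat.card_sigma, mul_comm]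
  simp only [Nat.card_eq_fintype_card]
  exact sum_card_fixedBy_eq_card_orbits_mul_card_group H (K →* H)

theorem chiGen_moebius_general (K : Type) [Group K] [Group.FG K]
    (G X : Type) [Group G] [Finite G] [MulAction G X]
    (μ : Subgroup G → ℚ)
    (hμ : ∀ P : Subgroup G,
      (∑ᶠ (H : Subgroup G) (_ : P ≤ H), μ H) =
        (Nat.card (MulAction.fixedPoints P X) : ℚ)) :
    chiGen K G X =
        ∑ᶠ H : Subgroup G,
          (Nat.card ((K × Multiplicative ℤ) →* H) : ℚ) / (Nat.card G : ℚ) * μ H ∧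
      chiGen K G X =
        ∑ᶠ H : Subgroup G,
          (Nat.card H : ℚ) / (Nat.card G : ℚ) *
            (Nat.card (Quotient (MulAction.orbitRel H (K →* H))) : ℚ) * μ H := by
  have := MonoidHom.finite_of_fg_s15 (K × Multiplicative ℤ) G
  have chiGen_eq_sum_card_hom : chiGen K G X =
      ∑ᶠ H : Subgroup G,
        (Nat.card ((K × Multiplicative ℤ) →* H) : ℚ) / (Nat.card G : ℚ) * μ H := calc
    chiGen K G X = (Nat.card G : ℚ)⁻¹ *
        ∑ᶠ φ : K × Multiplicative ℤ →* G, ∑ᶠ (H : Subgroup G) (_ : φ.range ≤ H), μ H := by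
      simp only [chiGen, hμ, fixedPoints_range, Set.coe_ofPred]
    _ = (Nat.card G : ℚ)⁻¹ *
        ∑ᶠ H : Subgroup G, Nat.card {φ : K × Multiplicative ℤ →* G // φ.range ≤ H} • μ H := by
      rw [finsum_finsum_le_eq_finsum_card_smul]
    _ = _ := by
      simp only [mul_finsum, Nat.card_congr (MonoidHom.rangeLeEquiv _ _), nsmul_eq_mul]
      ring_nf
  refine ⟨chiGen_eq_sum_card_hom, chiGen_eq_sum_card_hom.trans (finsum_congr fun H => ?_)⟩
  rw [MonoidHom.card_prodMultiplicativeInt, Nat.cast_mul]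
  ring

/-- **Lemma 2-2.** With the Möbius function `μ` on subgroups of `G` determined by
`Σ_{P ≤ H ≤ G} μ(H) = |X^P|`, one has
`χ_K(X;G) = Σ_{H≤G} (|Hom(K×ℤ,H)|/|G|)·μ(H) = Σ_{H≤G} (|H|/|G|)·|Hom(K,H)/H|·μ(H)`. -/
theorem chiGen_moebius (K : Type) [Group K] [Group.FG K]
    (G X : Type) [Group G] [Finite G] [MulAction G X] [Finite X]
    (μ : Subgroup G → ℚ)
    (hμ : ∀ P : Subgroup G,
      (∑ᶠ (H : Subgroup G) (_ : P ≤ H), μ H) =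
        (Nat.card (MulAction.fixedPoints P X) : ℚ)) :
    chiGen K G X =
        ∑ᶠ H : Subgroup G,
          (Nat.card ((K × Multiplicative ℤ) →* H) : ℚ) / (Nat.card G : ℚ) * μ H ∧
      chiGen K G X =
        ∑ᶠ H : Subgroup G,
          (Nat.card H : ℚ) / (Nat.card G : ℚ) *
            (Nat.card (Quotient (MulAction.orbitRel H (K →* H))) : ℚ) * μ H :=
  chiGen_moebius_general K G X μ hμ
end

section
/- Let Ĝ be a finite group acting on a finite set X, let G be a subgroup of Ĝ, and let a ∈ Ĝ be an element that commutes with every element of G and such that Ĝ is generated by G together with a. Let r ≥ 1 be an integer dividing the order of a such that ⟨a⟩ ∩ G = ⟨a^r⟩. Suppose a acts trivially on X. Then for every integer d ≥ 0, χ^{(d)}(X; Ĝ) = r^d · χ^{(d)}(X; G), where G acts on X by restriction of the Ĝ-action. -/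
/-! Since `a` is central and acts trivially, multiplying the entries of a tuple by powers of
`a` changes neither whether they commute nor their common fixed points. Summing over tuples in
`G × ⟨a⟩` through the surjection `(g, z) ↦ g z` onto `Ĝ`, whose fibres have `|G ∩ ⟨a⟩|`
elements, therefore relates the sums `Σ_Ĝ`, `Σ_G` defining the two characteristics by
`|G ∩ ⟨a⟩|^{d+1} Σ_Ĝ = |⟨a⟩|^{d+1} Σ_G`. As `[Ĝ : G] = |⟨a⟩| / |G ∩ ⟨a⟩| = |⟨a⟩| / |⟨a^r⟩| = r`,
the normalisations `1/|Ĝ|` and `1/|G|` leave the factor `r^d`. -/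

open Function

namespace MonoidHom

variable {A B : Type*} [Group A] [Group B]

theorem sum_comp_of_surjective [Fintype A] [Fintype B] {M : Type*} [AddCommMonoid M]
    (f : A →* B) (hf : Surjective f) (φ : B → M) :
    ∑ x, φ (f x) = Nat.card f.ker • ∑ y, φ y := by
  classical
  rw [← Fintype.sum_fiberwise' f, Finset.smul_sum]
  refine Fintype.sum_congr _ _ fun y => ?_
  rw [Finset.sum_const, Finset.card_univ, ← Nat.card_eq_fintype_card,
    ← Nat.card_congr (f.fiberEquivKerOfSurjective hf y)]
  rfl

theorem card_ker_compLeft (f : A →* B) (ι : Type*) [Finite ι] :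
    Nat.card (f.compLeft ι).ker = Nat.card f.ker ^ Nat.card ι := by
  let e : (f.compLeft ι).ker ≃ (ι → f.ker) :=
    (Equiv.subtypeEquivRight fun x => by simp [MonoidHom.mem_ker, funext_iff]).trans
      (Equiv.subtypePiEquivPi (p := fun _ y => f y = 1))
  rw [Nat.card_congr e, Nat.card_fun]

theorem sum_comp_compLeft_of_surjective [Fintype A] [Fintype B] {M : Type*} [AddCommMonoid M]
    (f : A →* B) (hf : Surjective f) (ι : Type*) [Fintype ι] [DecidableEq ι]
    (φ : (ι → B) → M) :
    ∑ p : ι → A, φ (f ∘ p) = Nat.card f.ker ^ Nat.card ι • ∑ q, φ q := by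
  rw [← card_ker_compLeft]
  exact (f.compLeft ι).sum_comp_of_surjective hf.comp_left φ

theorem card_mul_card_ker_of_surjective [Finite A] (f : A →* B) (hf : Surjective f) :
    Nat.card B * Nat.card f.ker = Nat.card A := by
  rw [← Nat.card_congr (QuotientGroup.quotientKerEquivOfSurjective f hf).toEquiv]
  exact (Subgroup.card_eq_card_quotient_mul_card_subgroup _).symm

theorem card_ker_fst : Nat.card (fst A B).ker = Nat.card B := by
  rw [ker_fst, Nat.card_congr (Subgroup.prodEquiv ⊥ ⊤).toEquiv, Nat.card_prod,
    Subgroup.card_bot, Subgroup.card_top, one_mul]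

end MonoidHom

namespace Subgroup

variable {H : Type*} [Group H]

theorem mem_center_of_closure_union_singleton_eq_top {s : Set H} {a : H}
    (hs : ∀ g ∈ s, a * g = g * a) (htop : closure (s ∪ {a}) = ⊤) : a ∈ center H := by
  rw [← centralizer_univ, ← coe_top, ← htop, centralizer_closure, mem_centralizer_iff]
  rintro g (hg | rfl)
  exacts [(hs g hg).symm, rfl]

theorem commute_mul_mul_iff_of_mem_center {a b z w : H} (hz : z ∈ center H)
    (hw : w ∈ center H) : Commute (a * z) (b * w) ↔ Commute a b := by
  have hzb : Commute z b := (mem_center_iff.mp hz b).symm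
  have hwa : Commute w a := (mem_center_iff.mp hw a).symm
  have hwz : Commute w z := mem_center_iff.mp hz w
  rw [commute_iff_eq, commute_iff_eq, hzb.mul_mul_mul_comm, hwa.mul_mul_mul_comm, hwz.eq,
    mul_left_inj]

theorem card_ker_noncommCoprod_subtype (K L : Subgroup H)
    (comm : ∀ (k : K) (l : L), Commute (K.subtype k) (L.subtype l)) :
    Nat.card (K.subtype.noncommCoprod L.subtype comm).ker = Nat.card (K ⊓ L : Subgroup H) := by
  refine Nat.card_congr
    { toFun := fun p => ⟨p.1.2, ?_, p.1.2.2⟩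
      invFun := fun x =>
        ⟨(⟨(x : H)⁻¹, K.inv_mem x.2.1⟩, ⟨x, x.2.2⟩), by simp [MonoidHom.mem_ker]⟩
      left_inv := ?_
      right_inv := fun x => rfl }
  · have hp : (p.1.2 : H) = (p.1.1 : H)⁻¹ :=
      eq_inv_of_mul_eq_one_right (MonoidHom.mem_ker.mp p.2)
    exact hp ▸ K.inv_mem p.1.1.2
  · rintro ⟨⟨k, l⟩, hkl⟩
    have hk : (k : H) = (l : H)⁻¹ := eq_inv_of_mul_eq_one_left (MonoidHom.mem_ker.mp hkl)
    ext <;> simp [hk]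

def mulOfLeCenter (K L : Subgroup H) (hL : L ≤ center H) : K × L →* H :=
  K.subtype.noncommCoprod L.subtype fun k l => mem_center_iff.mp (hL l.2) k

variable {K L : Subgroup H} (hL : L ≤ center H)

theorem mulOfLeCenter_surjective (hKL : K ⊔ L = ⊤) : Surjective (mulOfLeCenter K L hL) := by
  rw [← MonoidHom.range_eq_top, ← hKL]
  exact (MonoidHom.noncommCoprod_range _ _ _).trans (by rw [K.range_subtype, L.range_subtype])

theorem card_ker_mulOfLeCenter :
    Nat.card (mulOfLeCenter K L hL).ker = Nat.card (K ⊓ L : Subgroup H) :=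
  card_ker_noncommCoprod_subtype K L _

include hL in
theorem index_mul_card_inf_of_le_center [Finite H] (hKL : K ⊔ L = ⊤) :
    K.index * Nat.card (K ⊓ L : Subgroup H) = Nat.card L := by
  have hcard := (mulOfLeCenter K L hL).card_mul_card_ker_of_surjective
    (mulOfLeCenter_surjective hL hKL)
  rw [card_ker_mulOfLeCenter, Nat.card_prod, ← K.card_mul_index, mul_assoc] at hcard
  exact Nat.eq_of_mul_eq_mul_left Nat.card_pos hcard

end Subgroup

section CommFixCard

variable {ι H : Type*} [Group H] (X : Type*) [MulAction H X]

open scoped Classical in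
noncomputable def commFixCard (g : ι → H) : ℚ :=
  if ∀ i j, Commute (g i) (g j) then (Nat.card {x : X // ∀ i, g i • x = x} : ℚ) else 0

theorem orbChi_eq_sum (d : ℕ) [Fintype H] :
    orbChi d H X = (Nat.card H : ℚ)⁻¹ * ∑ g : Fin (d + 1) → H, commFixCard X g := by
  rw [orbChi, finsum_eq_sum_of_fintype]
  unfold commFixCard
  congr!

theorem commFixCard_mul_of_mem_center {g z : ι → H} (hz : ∀ i, z i ∈ Subgroup.center H)
    (hfix : ∀ i (x : X), z i • x = x) : commFixCard X (g * z) = commFixCard X g := by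
  have hcomm (i j : ι) : Commute (g i * z i) (g j * z j) ↔ Commute (g i) (g j) :=
    Subgroup.commute_mul_mul_iff_of_mem_center (hz i) (hz j)
  unfold commFixCard
  congr! 1
  · exact forall₂_congr hcomm
  · simp only [Pi.mul_apply, mul_smul, hfix]

theorem commFixCard_subtype (K : Subgroup H) (g : ι → K) :
    commFixCard X (fun i => (g i : H)) = commFixCard X g := by
  have hcomm (i j : ι) : Commute (g i : H) (g j) ↔ Commute (g i) (g j) :=
    Submonoid.commute_coe_coe
  unfold commFixCard
  congr! 1
  exact forall₂_congr hcomm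

variable {X} {K L : Subgroup H}

theorem card_inf_pow_mul_sum_commFixCard [Fintype H] [Fintype K] [Fintype L] [Fintype ι]
    [DecidableEq ι] (hL : L ≤ Subgroup.center H)
    (hLX : L ≤ fixingSubgroup H (Set.univ : Set X)) (hKL : K ⊔ L = ⊤) :
    (Nat.card (K ⊓ L : Subgroup H) : ℚ) ^ Nat.card ι * ∑ g : ι → H, commFixCard X g =
      (Nat.card L : ℚ) ^ Nat.card ι * ∑ g : ι → K, commFixCard X g := by
  let ψ := Subgroup.mulOfLeCenter K L hL
  have hterm (p : ι → K × L) : commFixCard X (ψ ∘ p) = commFixCard X (Prod.fst ∘ p) := by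
    rw [← commFixCard_subtype]
    exact commFixCard_mul_of_mem_center X (fun i => hL (p i).2.2)
      fun i x => (mem_fixingSubgroup_iff H).mp (hLX (p i).2.2) x (Set.mem_univ x)
  have h := (ψ.sum_comp_compLeft_of_surjective (Subgroup.mulOfLeCenter_surjective hL hKL) ι
    (commFixCard X)).symm.trans ((Fintype.sum_congr _ _ hterm).trans
      ((MonoidHom.fst K L).sum_comp_compLeft_of_surjective Prod.fst_surjective ι _))
  rw [Subgroup.card_ker_mulOfLeCenter, MonoidHom.card_ker_fst] at h
  simpa only [nsmul_eq_mul, Nat.cast_pow] using h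

theorem orbChi_eq_index_pow_mul_of_le_center [Finite H] (hL : L ≤ Subgroup.center H)
    (hLX : L ≤ fixingSubgroup H (Set.univ : Set X)) (hKL : K ⊔ L = ⊤) (d : ℕ) :
    orbChi d H X = (K.index : ℚ) ^ d * orbChi d K X := by
  classical
  have := Fintype.ofFinite H
  have hindex := Subgroup.index_mul_card_inf_of_le_center hL hKL
  have hinf : (Nat.card (K ⊓ L : Subgroup H) : ℚ) ≠ 0 := Nat.cast_ne_zero.mpr Nat.card_pos.ne'
  have hsum : ∑ g : Fin (d + 1) → H, commFixCard X g =
      (K.index : ℚ) ^ (d + 1) * ∑ g : Fin (d + 1) → K, commFixCard X g := by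
    have h := card_inf_pow_mul_sum_commFixCard (ι := Fin (d + 1)) hL hLX hKL
    rw [Nat.card_fin, ← hindex] at h
    refine mul_left_cancel₀ (pow_ne_zero (d + 1) hinf) ?_
    rw [h]
    push_cast
    ring
  have hK : (K.index : ℚ) ≠ 0 := Nat.cast_ne_zero.mpr Subgroup.index_ne_zero_of_finite
  rw [orbChi_eq_sum, orbChi_eq_sum, hsum, ← K.card_mul_index]
  push_cast
  field_simp
  ring

end CommFixCard

theorem orbChi_adjoin_central_element_general
    (Ghat : Type) [Group Ghat] [Finite Ghat] (X : Type) [MulAction Ghat X]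
    (G : Subgroup Ghat) (a : Ghat)
    (hcomm : ∀ g ∈ G, a * g = g * a)
    (hgen : Subgroup.closure ((G : Set Ghat) ∪ {a}) = ⊤)
    (r : ℕ) (hdvd : r ∣ orderOf a)
    (hint : Subgroup.zpowers a ⊓ G = Subgroup.zpowers (a ^ r))
    (htriv : ∀ x : X, a • x = x) (d : ℕ) :
    orbChi d Ghat X = (r : ℚ) ^ d * orbChi d G X := by
  have hcenter : Subgroup.zpowers a ≤ Subgroup.center Ghat := Subgroup.zpowers_le.mpr
    (Subgroup.mem_center_of_closure_union_singleton_eq_top hcomm hgen)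
  have hfix : Subgroup.zpowers a ≤ fixingSubgroup Ghat (Set.univ : Set X) :=
    Subgroup.zpowers_le.mpr ((mem_fixingSubgroup_iff Ghat).mpr fun x _ => htriv x)
  have hsup : G ⊔ Subgroup.zpowers a = ⊤ := by
    rw [← hgen, Subgroup.closure_union, Subgroup.closure_eq, Subgroup.zpowers_eq_closure]
  have hindex : G.index = r := by
    have h := Subgroup.index_mul_card_inf_of_le_center hcenter hsup
    rw [inf_comm, hint, Nat.card_zpowers, Nat.card_zpowers] at h
    have hr : r * orderOf (a ^ r) = orderOf a := by
      rw [orderOf_pow, Nat.gcd_eq_right hdvd, Nat.mul_div_cancel' hdvd]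
    exact Nat.eq_of_mul_eq_mul_right (orderOf_pos _) (h.trans hr.symm)
  rw [orbChi_eq_index_pow_mul_of_le_center hcenter hfix hsup d, hindex]

/-- **Lemma 4-1.** If `Ghat = G·⟨a⟩` with `a` central, `⟨a⟩ ∩ G = ⟨a^r⟩`, and `a` acting trivially
on `X`, then `χ^{(d)}(X; G·⟨a⟩) = r^d · χ^{(d)}(X;G)`. -/
theorem orbChi_adjoin_central_element
    (Ghat : Type) [Group Ghat] [Finite Ghat] (X : Type) [Finite X] [MulAction Ghat X]
    (G : Subgroup Ghat) (a : Ghat)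
    (hcomm : ∀ g ∈ G, a * g = g * a)
    (hgen : Subgroup.closure ((G : Set Ghat) ∪ {a}) = ⊤)
    (r : ℕ) (hr : 1 ≤ r) (hdvd : r ∣ orderOf a)
    (hint : Subgroup.zpowers a ⊓ G = Subgroup.zpowers (a ^ r))
    (htriv : ∀ x : X, a • x = x) (d : ℕ) :
    orbChi d Ghat X = (r : ℚ) ^ d * orbChi d G X :=
  orbChi_adjoin_central_element_general Ghat X G a hcomm hgen r hdvd hint htriv d
end

section
/- Let G be a group acting on a set X, let r ≥ 1 be an integer, let σ ∈ 𝔖_r be the cyclic permutation of Fin r = {0,1,…,r−1} given by i ↦ i+1 (mod r), let g = (g_0,…,g_{r−1}) ∈ G^r, and set c = g_{r−1}⋯g_1·g_0. Then the map x ↦ x_{r−1} is a bijection from the fixed-point set of the element (g,σ) ∈ G≀𝔖_r acting on X^r onto X^{⟨c⟩} = {y ∈ X : c·y = y}. In particular the fixed-point set of (g,σ) on X^r is in bijection with the fixed-point set of the cycle product c on X. -/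
/-- The permutation action of `Equiv.Perm (Fin n)` on `Fin n → G` by automorphisms. -/
def wreathAut (G : Type*) [Group G] (n : ℕ) : Equiv.Perm (Fin n) →* MulAut (Fin n → G) where
  toFun s :=
    { toFun := fun g i => g (s⁻¹ i)
      invFun := fun g i => g (s i)
      left_inv := fun g => funext fun i => by simp
      right_inv := fun g => funext fun i => by simp
      map_mul' := fun g h => rfl }
  map_one' := by
    ext g i
    simp
  map_mul' s t := by
    ext g i
    simp [mul_comm]

/-- The wreath product `G ≀ 𝔖_n`. -/
abbrev WreathProduct (G : Type*) [Group G] (n : ℕ) : Type _ :=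
  SemidirectProduct (Fin n → G) (Equiv.Perm (Fin n)) (wreathAut G n)

/-- The action of `G ≀ 𝔖_n` on `Xⁿ`, `((g,s)·x) i = g i • x (s⁻¹ i)`. -/
instance wreathMulAction (G X : Type*) [Group G] [MulAction G X] (n : ℕ) :
    MulAction (WreathProduct G n) (Fin n → X) where
  smul w x := fun i => w.left i • x (w.right⁻¹ i)
  one_smul x := funext fun i => by
    show (1 : WreathProduct G n).left i • x ((1 : WreathProduct G n).right⁻¹ i) = x i
    simp
  mul_smul w v x := funext fun i => by
    show (w * v).left i • x ((w * v).right⁻¹ i)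
        = w.left i • (fun j => v.left j • x (v.right⁻¹ j)) (w.right⁻¹ i)
    simp [SemidirectProduct.mul_left, SemidirectProduct.mul_right, wreathAut, mul_smul]


/-- The cycle product `g_{r-1} ⋯ g_1 g_0` of a tuple `g : Fin r → G`. -/
def cycleProdOf {G : Type*} [Group G] {r : ℕ} (g : Fin r → G) : G :=
  (List.ofFn g).reverse.prod

/-! A fixed point `x` of `(g, σ)` satisfies `x (i + 1) = g (i + 1) • x i` all around the cycle, so
it is determined by `y = x (r - 1)` through `x k = (g_k ⋯ g_0) • y`; going once around the cycle
forces `c • y = y`, and conversely every such `y` spreads out to a fixed point in this way. -/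

section PartialCycleProd

variable {G : Type*} [Group G] {n : ℕ}

/-- `partialCycleProd g k = g_k ⋯ g_1 g_0`. -/
def partialCycleProd (g : Fin (n + 1) → G) (k : Fin (n + 1)) : G :=
  ((List.ofFn g).take ((k : ℕ) + 1)).reverse.prod

theorem partialCycleProd_zero (g : Fin (n + 1) → G) : partialCycleProd g 0 = g 0 := by
  simp [partialCycleProd]

theorem partialCycleProd_succ (g : Fin (n + 1) → G) (i : Fin n) :
    partialCycleProd g i.succ = g i.succ * partialCycleProd g i.castSucc := by
  simp only [partialCycleProd, Fin.val_succ, Fin.val_castSucc]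
  rw [List.take_add_one]
  simp

theorem partialCycleProd_last (g : Fin (n + 1) → G) :
    partialCycleProd g (Fin.last n) = cycleProdOf g := by
  simp [partialCycleProd, cycleProdOf, List.take_of_length_le]

end PartialCycleProd

namespace WreathProduct

variable {G X : Type*} [Group G] [MulAction G X] {n : ℕ}

theorem smul_finRotate_apply_add_one (g : Fin (n + 1) → G) (x : Fin (n + 1) → X)
    (i : Fin (n + 1)) :
    ((⟨g, finRotate (n + 1)⟩ : WreathProduct G (n + 1)) • x) (i + 1) = g (i + 1) • x i := by
  change g (i + 1) • x ((finRotate (n + 1)).symm (i + 1)) = _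
  rw [← finRotate_apply, Equiv.symm_apply_apply]

-- Without the ascription, elaborating `• x = x` at `Fin (n + 1)` exhausts the instance-search budget.
theorem smul_finRotate_eq_self_iff (g : Fin (n + 1) → G) (x : Fin (n + 1) → X) :
    ((⟨g, finRotate (n + 1)⟩ : WreathProduct G (n + 1)) • x : Fin (n + 1) → X) = x ↔
      ∀ i, g (i + 1) • x i = x (i + 1) := by
  rw [funext_iff, (Equiv.addRight (1 : Fin (n + 1))).surjective.forall]
  simp only [Equiv.coe_addRight, smul_finRotate_apply_add_one]

theorem eq_partialCycleProd_smul_last {g : Fin (n + 1) → G} {x : Fin (n + 1) → X}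
    (hx : ∀ i, g (i + 1) • x i = x (i + 1)) (k : Fin (n + 1)) :
    x k = partialCycleProd g k • x (Fin.last n) := by
  induction k using Fin.induction with
  | zero => rw [partialCycleProd_zero, ← Fin.last_add_one n, hx]
  | succ i ih => rw [partialCycleProd_succ, mul_smul, ← ih, ← Fin.coeSucc_eq_succ, hx]

theorem smul_partialCycleProd_smul_add_one {g : Fin (n + 1) → G} {y : X}
    (hy : cycleProdOf g • y = y) (i : Fin (n + 1)) :
    g (i + 1) • partialCycleProd g i • y = partialCycleProd g (i + 1) • y := by
  induction i using Fin.lastCases with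
  | last => rw [partialCycleProd_last, hy, Fin.last_add_one, partialCycleProd_zero]
  | cast i => rw [Fin.coeSucc_eq_succ, partialCycleProd_succ, mul_smul]

end WreathProduct

/-- **Proposition 3-2** (single cycle case): for the `r`-cycle `σ : i ↦ i+1 (mod r)` and
`g : Fin r → G`, the map `x ↦ x_{r-1}` is a bijection from the fixed point set of
`(g,σ) ∈ G≀𝔖_r` on `X^r` onto the fixed point set `X^{⟨c⟩}` of the cycle product
`c = g_{r-1}⋯g_1g_0` on `X`. -/
theorem wreath_cycle_fixedPoints_bijOn (G X : Type) [Group G] [MulAction G X]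
    (r : ℕ) (hr : 1 ≤ r) (g : Fin r → G) :
    Set.BijOn (fun x : Fin r → X => x ⟨r - 1, by omega⟩)
      {x : Fin r → X | (⟨g, finRotate r⟩ : WreathProduct G r) • x = x}
      {y : X | cycleProdOf g • y = y} := by
  obtain ⟨n, rfl⟩ : ∃ n, r = n + 1 := ⟨r - 1, by omega⟩
  change Set.BijOn (fun x : Fin (n + 1) → X => x (Fin.last n)) _ _
  have eq_smul_last {x : Fin (n + 1) → X} (hx : x ∈ {x | _}) :=
    WreathProduct.eq_partialCycleProd_smul_last
      ((WreathProduct.smul_finRotate_eq_self_iff g x).1 hx)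
  refine Set.InvOn.bijOn (f' := fun y k => partialCycleProd g k • y) ⟨?_, ?_⟩ ?_ ?_
  · exact fun x hx => funext fun k => (eq_smul_last hx k).symm
  · intro y (hy : cycleProdOf g • y = y)
    simpa only [partialCycleProd_last] using hy
  · intro x hx
    show cycleProdOf g • x (Fin.last n) = x (Fin.last n)
    rw [← partialCycleProd_last, ← eq_smul_last hx]
  · exact fun y hy => (WreathProduct.smul_finRotate_eq_self_iff g _).2
      (WreathProduct.smul_partialCycleProd_smul_add_one hy)
end
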